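/- arXiv:1411.2434 — 7 statements merged into one kernel-verified Lean document; each statement's English description precedes it below -/
import Mathlib

section
/- Let (M,d) be a separable ultrametric space with a distinguished point 0. Then the Lipschitz-free space F(M) has a monotone Schauder basis. -/
open scoped NNReal ENNReal
open Metric Filter

noncomputable section

/-- The space `Lip₀(M)` of real-valued Lipschitz functions on `M` vanishing at the
distinguished point `base`, as a submodule of `M → ℝ`. -/
def LipZero (M : Type*) [MetricSpace M] (base : M) : Submodule ℝ (M → ℝ) where
  carrier := {f | MemHolder 1 f ∧ f base = 0}
  add_mem' := fun hf hg => ⟨hf.1.add hg.1, by simp [hf.2, hg.2]⟩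
  zero_mem' := ⟨memHolder_zero, rfl⟩
  smul_mem' := fun c f hf => ⟨hf.1.smul, by simp [hf.2]⟩

/-- The topological dual of a normed space (Mathlib's former `NormedSpace.Dual`). -/
abbrev NormedSpace.Dual (𝕜 : Type*) [NontriviallyNormedField 𝕜] (E : Type*)
    [SeminormedAddCommGroup E] [NormedSpace 𝕜 E] : Type _ :=
  E →L[𝕜] 𝕜

variable {M : Type*} [MetricSpace M] {base : M}

lemma LipZero.memHolder (f : LipZero M base) : MemHolder 1 (f : M → ℝ) := f.2.1

lemma LipZero.base_eq_zero (f : LipZero M base) : (f : M → ℝ) base = 0 := f.2.2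

lemma LipZero.lipschitzWith (f : LipZero M base) :
    LipschitzWith (nnHolderNorm 1 (f : M → ℝ)) (f : M → ℝ) :=
  holderWith_one.mp f.2.1.holderWith

/-- The norm on `Lip₀(M)`: the optimal Lipschitz constant. -/
noncomputable instance LipZero.normedAddCommGroup : NormedAddCommGroup (LipZero M base) :=
  AddGroupNorm.toNormedAddCommGroup
    { toFun := fun f => nnHolderNorm 1 (f : M → ℝ)
      map_zero' := by simp
      add_le' := fun f g => by
        have := (LipZero.memHolder f).nnHolderNorm_add_le (LipZero.memHolder g)
        exact_mod_cast this
      neg' := fun f => by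
        show (nnHolderNorm 1 ((-f : LipZero M base) : M → ℝ) : ℝ) = _
        have h : ((-f : LipZero M base) : M → ℝ) = (-1 : ℝ) • (f : M → ℝ) := by
          simp
        rw [h, (LipZero.memHolder f).nnHolderNorm_smul ((-1 : ℝ))]
        simp
      eq_zero_of_map_eq_zero' := fun f hf => by
        have hf' : (nnHolderNorm 1 (f : M → ℝ) : ℝ) = 0 := hf
        have h0 : nnHolderNorm 1 (f : M → ℝ) = 0 := by exact_mod_cast hf'
        have hconst := ((LipZero.memHolder f).nnHolderNorm_eq_zero).mp h0
        have : ∀ x, (f : M → ℝ) x = 0 := fun x =>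
          (hconst x base).trans (LipZero.base_eq_zero f)
        exact Subtype.ext (funext this) }

lemma LipZero.norm_def (f : LipZero M base) :
    ‖f‖ = (nnHolderNorm 1 (f : M → ℝ) : ℝ) := rfl

noncomputable instance LipZero.normedSpace : NormedSpace ℝ (LipZero M base) where
  norm_smul_le c f := by
    have : ((c • f : LipZero M base) : M → ℝ) = c • (f : M → ℝ) := rfl
    rw [LipZero.norm_def, LipZero.norm_def, this, (LipZero.memHolder f).nnHolderNorm_smul c]
    push_cast
    simp [norm_smul]

lemma LipZero.dist_le (f : LipZero M base) (x y : M) :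
    dist ((f : M → ℝ) x) ((f : M → ℝ) y) ≤ ‖f‖ * dist x y :=
  (LipZero.lipschitzWith f).dist_le_mul x y

variable (M base) in
/-- The Dirac map `δ : M → Lip₀(M)*`. -/
noncomputable def freeDelta (x : M) : NormedSpace.Dual ℝ (LipZero M base) :=
  LinearMap.mkContinuous
    { toFun := fun f => (f : M → ℝ) x
      map_add' := fun f g => rfl
      map_smul' := fun c f => rfl }
    (dist x base)
    (fun f => by
      have h := LipZero.dist_le f x base
      rw [LipZero.base_eq_zero f, dist_zero_right] at h
      simpa [mul_comm] using h)

variable (M base) in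
/-- The Lipschitz-free space `F(M)`: the closed linear span of the Dirac measures
inside `Lip₀(M)*`. -/
noncomputable def FreeSpace : Submodule ℝ (NormedSpace.Dual ℝ (LipZero M base)) :=
  (Submodule.span ℝ (Set.range (freeDelta M base))).topologicalClosure

variable (M base) in
/-- The Dirac map, viewed as a map into the free space `F(M)`. -/
noncomputable def freeDeltaF (x : M) : FreeSpace M base :=
  ⟨freeDelta M base x,
    Submodule.le_topologicalClosure _ (Submodule.subset_span ⟨x, rfl⟩)⟩

instance : CompleteSpace (FreeSpace M base) :=
  IsClosed.completeSpace_coe (hs := Submodule.isClosed_topologicalClosure _)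


/-- `c` represents `x` in terms of the sequence `e`: the partial sums `∑_{i<n} cᵢ eᵢ`
converge to `x`. -/
def IsSchauderRep {X : Type*} [NormedAddCommGroup X] [NormedSpace ℝ X]
    (e : ℕ → X) (x : X) (c : ℕ → ℝ) : Prop :=
  Filter.Tendsto (fun n => ∑ i ∈ Finset.range n, c i • e i) Filter.atTop (nhds x)

/-- `X` has a monotone Schauder basis: a (finite or infinite) sequence `e` such that every
`x ∈ X` is uniquely represented as `x = ∑ᵢ cᵢ eᵢ`, and all the canonical projections
(partial-sum operators) have norm at most `1`. -/
def HasMonotoneSchauderBasis (X : Type*) [NormedAddCommGroup X] [NormedSpace ℝ X] : Prop :=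
  (∃ (d : ℕ) (e : Fin d → X),
      (∀ x : X, ∃! c : Fin d → ℝ, x = ∑ i, c i • e i) ∧
      (∀ (x : X) (c : Fin d → ℝ), x = ∑ i, c i • e i →
        ∀ n : ℕ, ‖∑ i ∈ Finset.univ.filter (fun i : Fin d => (i : ℕ) < n), c i • e i‖ ≤ ‖x‖)) ∨
  (∃ e : ℕ → X,
      (∀ x : X, ∃! c : ℕ → ℝ, IsSchauderRep e x c) ∧
      (∀ (x : X) (c : ℕ → ℝ), IsSchauderRep e x c →
        ∀ n : ℕ, ‖∑ i ∈ Finset.range n, c i • e i‖ ≤ ‖x‖))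

/-!
Enumerate a dense sequence `x₀ = base, x₁, …` of distinct points and let `p k < k` be the index
of a nearest earlier point to `x k`. The molecules `eₙ = δ(xₙ₊₁) - δ(x_{p(n+1)})` span a dense
subspace of `F(M)`. In an ultrametric space, iterating `p` until the index is at most `N` gives a
retraction `r` of the indices that is `1`-Lipschitz on the points `x k`; by the McShane extension of
`f ∘ r`, the induced map `δ(x k) ↦ δ(x (r k))` does not increase the norm in `F(M)`, and it sends
`∑_{n<m} cₙ eₙ` to `∑_{n<N} cₙ eₙ`. So the partial sums grow in norm, and a sequence of nonzero
vectors with this property and dense span is a monotone Schauder basis (Grünblum's criterion).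
-/

section MonotoneBasic

open Finset

variable {X : Type*} [NormedAddCommGroup X] [NormedSpace ℝ X]

def IsMonotoneBasic (e : ℕ → X) : Prop :=
  ∀ (c : ℕ → ℝ) {n m : ℕ}, n ≤ m →
    ‖∑ i ∈ range n, c i • e i‖ ≤ ‖∑ i ∈ range m, c i • e i‖

lemma exists_eq_sum_range_of_mem_span {R E : Type*} [Semiring R] [AddCommMonoid E] [Module R E]
    {e : ℕ → E} {y : E} (hy : y ∈ Submodule.span R (Set.range e)) :
    ∃ (c : ℕ → R) (m : ℕ), y = ∑ i ∈ range m, c i • e i := by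
  obtain ⟨c, rfl⟩ := Finsupp.mem_span_range_iff_exists_finsupp.mp hy
  obtain ⟨m, hm⟩ := exists_nat_subset_range c.support
  exact ⟨c, m, Finsupp.sum_of_support_subset c hm _ fun i _ => zero_smul R (e i)⟩

lemma Dense.forall_of_forall_sum_range {e : ℕ → X}
    (hdense : Dense (Submodule.span ℝ (Set.range e) : Set X)) {p : X → Prop}
    (hp : IsClosed {x | p x}) (h : ∀ (c : ℕ → ℝ) (m : ℕ), p (∑ i ∈ range m, c i • e i))
    (x : X) : p x :=
  hdense.induction (fun _ hy => by
    obtain ⟨c, m, rfl⟩ := exists_eq_sum_range_of_mem_span hy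
    exact h c m) hp x

namespace IsMonotoneBasic

variable {e : ℕ → X}

lemma coeff_eq_zero (he : IsMonotoneBasic e) {c : ℕ → ℝ} {m : ℕ} (hne : ∀ n < m, e n ≠ 0)
    (h : ∑ i ∈ range m, c i • e i = 0) {n : ℕ} (hn : n < m) : c n = 0 := by
  have hsum : ∀ k ≤ m, ∑ i ∈ range k, c i • e i = 0 := fun k hk =>
    norm_le_zero_iff.mp (by simpa [h] using he c hk)
  have hlast := hsum (n + 1) hn
  rw [sum_range_succ, hsum n hn.le, zero_add] at hlast
  exact (smul_eq_zero.mp hlast).resolve_right (hne n hn)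

lemma linearIndependent (he : IsMonotoneBasic e) (hne : ∀ n, e n ≠ 0) :
    LinearIndependent ℝ e := by
  classical
  refine linearIndependent_iff'.mpr fun s g hg i hi => ?_
  obtain ⟨m, hm⟩ := exists_nat_subset_range s
  have hsum : ∑ j ∈ range m, (if j ∈ s then g j else 0) • e j = 0 := by
    rw [← hg, ← sum_subset hm fun j _ hj => by simp [hj]]
    exact sum_congr rfl fun j hj => by simp [hj]
  simpa [hi] using he.coeff_eq_zero (fun n _ => hne n) hsum (mem_range.mp (hm hi))

end IsMonotoneBasic

variable {e : ℕ → X}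

lemma sum_range_ite_lt (c : ℕ → ℝ) (n m : ℕ) :
    ∑ i ∈ range m, (if i < n then c i • e i else 0) = ∑ i ∈ range (min n m), c i • e i := by
  rw [← sum_filter]
  congr 1
  ext k
  simp [and_comm]

lemma sum_fin_filter_lt_eq_sum_range {d : ℕ} (c : Fin d → ℝ) (n : ℕ) :
    ∑ i ∈ univ.filter (fun i : Fin d => (i : ℕ) < n), c i • e i =
      ∑ k ∈ range (min n d), (if h : k < d then c ⟨k, h⟩ else 0) • e k := by
  set g : ℕ → X := fun k => if k < n then (if h : k < d then c ⟨k, h⟩ else 0) • e k else 0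
  have hg (i : Fin d) : (if (i : ℕ) < n then c i • e i else 0) = g i := by simp [g]
  rw [sum_filter, sum_congr rfl fun i _ => hg i, Fin.sum_univ_eq_sum_range g, sum_range_ite_lt]

lemma IsMonotoneBasic.hasMonotoneSchauderBasis_of_span_fin (he : IsMonotoneBasic e) {d : ℕ}
    (hne : ∀ n < d, e n ≠ 0) (hspan : Submodule.span ℝ (Set.range fun i : Fin d => e i) = ⊤) :
    HasMonotoneSchauderBasis X := by
  have hsum (c : Fin d → ℝ) :
      ∑ i, c i • e i = ∑ k ∈ range d, (if h : k < d then c ⟨k, h⟩ else 0) • e k := by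
    simpa using sum_fin_filter_lt_eq_sum_range (e := e) c d
  refine Or.inl ⟨d, fun i => e i, fun x => ?_, fun x c hx n => ?_⟩
  · have hx : x ∈ Submodule.span ℝ (Set.range fun i : Fin d => e i) := hspan ▸ Submodule.mem_top
    obtain ⟨c, rfl⟩ := (Submodule.mem_span_range_iff_exists_fun ℝ).mp hx
    refine ⟨c, rfl, fun c' hc' => funext fun i => ?_⟩
    have hzero : ∑ i, (c' - c) i • e i = 0 := by
      simp [sub_smul, ← hc']
    rw [hsum] at hzero
    simpa [sub_eq_zero] using he.coeff_eq_zero hne hzero i.2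
  · rw [sum_fin_filter_lt_eq_sum_range, hx, hsum]
    exact he _ (min_le_right n d)

def IsPartialSumProjection (P : ℕ → X →L[ℝ] X) (e : ℕ → X) : Prop :=
  ∀ (n m : ℕ) (c : ℕ → ℝ), P n (∑ i ∈ range m, c i • e i) = ∑ i ∈ range (min n m), c i • e i

lemma IsMonotoneBasic.exists_projections [CompleteSpace X] (he : IsMonotoneBasic e)
    (hne : ∀ n, e n ≠ 0) (hdense : Dense (Submodule.span ℝ (Set.range e) : Set X)) :
    ∃ P : ℕ → X →L[ℝ] X, (∀ n, ‖P n‖ ≤ 1) ∧ IsPartialSumProjection P e := by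
  classical
  set V := Submodule.span ℝ (Set.range e)
  let b : Module.Basis ℕ ℝ V := .span (he.linearIndependent hne)
  have hb (c : ℕ → ℝ) (m : ℕ) :
      ((∑ i ∈ range m, c i • b i : V) : X) = ∑ i ∈ range m, c i • e i := by
    push_cast
    exact sum_congr rfl fun i _ => by rw [Module.Basis.span_apply]
  have hV (y : V) : ∃ (c : ℕ → ℝ) (m : ℕ), y = ∑ i ∈ range m, c i • b i := by
    obtain ⟨c, m, hy⟩ := exists_eq_sum_range_of_mem_span y.2
    exact ⟨c, m, Subtype.ext (by rw [hb, hy])⟩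
  let Q (n : ℕ) : V →ₗ[ℝ] X := b.constr ℝ fun i => if i < n then e i else 0
  have hQ (n m : ℕ) (c : ℕ → ℝ) :
      Q n (∑ i ∈ range m, c i • b i) = ∑ i ∈ range (min n m), c i • e i := by
    simp [Q, ← sum_range_ite_lt]
  have hQ_le (n : ℕ) (y : V) : ‖Q n y‖ ≤ 1 * ‖y‖ := by
    obtain ⟨c, m, rfl⟩ := hV y
    rw [hQ, one_mul, ← Submodule.norm_coe, hb]
    exact he c (min_le_right n m)
  have hdr : DenseRange V.subtypeL := by simpa [DenseRange] using hdense
  refine ⟨fun n => ((Q n).mkContinuous 1 (hQ_le n)).extend V.subtypeL, fun n => ?_,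
    fun n m c => ?_⟩
  · refine (ContinuousLinearMap.opNorm_extend_le _ (N := 1) hdr fun y => by simp).trans ?_
    simpa using LinearMap.mkContinuous_norm_le _ zero_le_one (hQ_le n)
  · rw [← hb, ← V.subtypeL_apply, ContinuousLinearMap.extend_eq _ hdr
      isometry_subtype_coe.isUniformInducing, LinearMap.mkContinuous_apply, hQ]

end MonotoneBasic

section Gruenblum
open Finset Filter Topology
variable {X : Type*} [NormedAddCommGroup X] [NormedSpace ℝ X] {e : ℕ → X} {P : ℕ → X →L[ℝ] X}

namespace IsPartialSumProjection

lemma tendsto (hP : IsPartialSumProjection P e)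
    (hdense : Dense (Submodule.span ℝ (Set.range e) : Set X)) (hP1 : ∀ n, ‖P n‖ ≤ 1) (x : X) :
    Tendsto (fun n => P n x) atTop (𝓝 x) := by
  have hequi : Equicontinuous fun n => (P n : X → X) :=
    ((NormedSpace.equicontinuous_TFAE P).out 5 1).mp (⟨1, hP1⟩ : ∃ C, ∀ n, ‖P n‖ ≤ C)
  refine hdense.forall_of_forall_sum_range (hequi.isClosed_setOfPred_tendsto continuous_id)
    (fun c m => tendsto_const_nhds.congr' ?_) x
  filter_upwards [eventually_ge_atTop m] with n hn
  rw [id, hP, min_eq_right hn]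

lemma zero_apply (hP : IsPartialSumProjection P e)
    (hdense : Dense (Submodule.span ℝ (Set.range e) : Set X)) (x : X) : P 0 x = 0 :=
  hdense.forall_of_forall_sum_range (isClosed_eq (P 0).continuous continuous_const)
    (fun c m => by rw [hP, Nat.zero_min, sum_range_zero]) x

lemma succ_sub_mem_span (hP : IsPartialSumProjection P e)
    (hdense : Dense (Submodule.span ℝ (Set.range e) : Set X)) (n : ℕ) (x : X) :
    P (n + 1) x - P n x ∈ Submodule.span ℝ {e n} := by
  refine hdense.forall_of_forall_sum_range
    (((Submodule.span ℝ {e n}).closed_of_finiteDimensional).preimage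
      (P (n + 1) - P n).continuous) (fun c m => ?_) x
  show P (n + 1) _ - P n _ ∈ _
  rw [hP, hP]
  rcases lt_or_ge n m with hnm | hmn
  · rw [min_eq_left hnm, min_eq_left hnm.le, sum_range_succ, add_sub_cancel_left]
    exact Submodule.smul_mem _ _ (Submodule.mem_span_singleton_self _)
  · rw [min_eq_right (hmn.trans n.le_succ), min_eq_right hmn, sub_self]
    exact Submodule.zero_mem _

lemma sum_range_eq_of_isSchauderRep (hP : IsPartialSumProjection P e) {x : X} {c : ℕ → ℝ}
    (hc : IsSchauderRep e x c) (n : ℕ) : ∑ i ∈ range n, c i • e i = P n x := by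
  refine tendsto_nhds_unique (tendsto_const_nhds.congr' ?_) (((P n).continuous.tendsto x).comp hc)
  filter_upwards [eventually_ge_atTop n] with m hm
  rw [Function.comp_apply, hP, min_eq_left hm]

lemma smul_eq_sub_of_isSchauderRep (hP : IsPartialSumProjection P e) {x : X} {c : ℕ → ℝ}
    (hc : IsSchauderRep e x c) (n : ℕ) : c n • e n = P (n + 1) x - P n x := by
  rw [← hP.sum_range_eq_of_isSchauderRep hc, ← hP.sum_range_eq_of_isSchauderRep hc,
    sum_range_succ, add_sub_cancel_left]

lemma hasMonotoneSchauderBasis (hP : IsPartialSumProjection P e) (hne : ∀ n, e n ≠ 0)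
    (hdense : Dense (Submodule.span ℝ (Set.range e) : Set X)) (hP1 : ∀ n, ‖P n‖ ≤ 1) :
    HasMonotoneSchauderBasis X := by
  refine Or.inr ⟨e, fun x => ?_, fun x c hc n => ?_⟩
  · choose a ha using fun n => Submodule.mem_span_singleton.mp (hP.succ_sub_mem_span hdense n x)
    have hsum (n : ℕ) : ∑ i ∈ range n, a i • e i = P n x := by
      rw [sum_congr rfl fun i _ => ha i, sum_range_sub (fun i => P i x), hP.zero_apply hdense,
        sub_zero]
    refine ⟨a, ?_, fun c hc => funext fun n => smul_left_injective ℝ (hne n) ?_⟩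
    · simpa only [IsSchauderRep, hsum] using hP.tendsto hdense hP1 x
    · simp only [hP.smul_eq_sub_of_isSchauderRep hc, ha]
  · rw [hP.sum_range_eq_of_isSchauderRep hc]
    simpa using (P n).le_of_opNorm_le (hP1 n) x

end IsPartialSumProjection

lemma IsMonotoneBasic.hasMonotoneSchauderBasis [CompleteSpace X] (he : IsMonotoneBasic e)
    (hne : ∀ n, e n ≠ 0) (hdense : Dense (Submodule.span ℝ (Set.range e) : Set X)) :
    HasMonotoneSchauderBasis X :=
  let ⟨_, hP1, hP⟩ := he.exists_projections hne hdense
  hP.hasMonotoneSchauderBasis hne hdense hP1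

end Gruenblum

section LipschitzFree
open Finset
/- `LipZero M base` is a subtype of `M → ℝ`, so instance search also finds the product topology;
the dual space in `freeDelta` is taken for the norm topology, which must take precedence. -/
instance (priority := 2000) LipZero.instTopologicalSpace : TopologicalSpace (LipZero M base) :=
  PseudoMetricSpace.toUniformSpace.toTopologicalSpace

def LipZero.ofLipschitzWith {K : ℝ≥0} (g : M → ℝ) (hg : LipschitzWith K g) (h0 : g base = 0) :
    LipZero M base :=
  ⟨g, ⟨K, holderWith_one.mpr hg⟩, h0⟩

lemma LipZero.norm_ofLipschitzWith_le {K : ℝ≥0} {g : M → ℝ} (hg : LipschitzWith K g)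
    (h0 : g base = 0) : ‖LipZero.ofLipschitzWith g hg h0‖ ≤ K :=
  NNReal.coe_le_coe.mpr (holderWith_one.mpr hg).nnholderNorm_le

lemma freeDelta_apply (x : M) (f : LipZero M base) : freeDelta M base x f = (f : M → ℝ) x := rfl

lemma freeDelta_base : freeDelta M base base = 0 :=
  ContinuousLinearMap.ext LipZero.base_eq_zero

lemma norm_freeDelta_sub_le (x y : M) :
    ‖freeDelta M base x - freeDelta M base y‖ ≤ dist x y :=
  ContinuousLinearMap.opNorm_le_bound _ dist_nonneg fun f => by
    simpa [freeDelta_apply, ← Real.dist_eq, mul_comm] using LipZero.dist_le f x y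

lemma freeDelta_injective : Function.Injective (freeDelta M base) := by
  intro x y hxy
  have hg : LipschitzWith 1 fun w => dist w y - dist base y :=
    LipschitzWith.of_dist_le_mul fun a b => by
      simpa [Real.dist_eq] using abs_dist_sub_le a b y
  have := congrArg (· (LipZero.ofLipschitzWith _ hg (sub_self _))) hxy
  simpa [freeDelta_apply, LipZero.ofLipschitzWith] using this

lemma norm_sum_smul_freeDelta_sub_comp_le {ι : Type*} {S : Set M} {φ : M → M}
    (hφ : LipschitzOnWith 1 φ S) (hbase : base ∈ S) (hφbase : φ base = base)
    (s : Finset ι) (c : ι → ℝ) {p q : ι → M} (hp : ∀ i ∈ s, p i ∈ S) (hq : ∀ i ∈ s, q i ∈ S) :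
    ‖∑ i ∈ s, c i • (freeDelta M base (φ (p i)) - freeDelta M base (φ (q i)))‖ ≤
      ‖∑ i ∈ s, c i • (freeDelta M base (p i) - freeDelta M base (q i))‖ := by
  set T := ∑ i ∈ s, c i • (freeDelta M base (p i) - freeDelta M base (q i))
  refine ContinuousLinearMap.opNorm_le_bound _ (norm_nonneg T) fun f => ?_
  obtain ⟨g, hg, hfg⟩ := ((LipZero.lipschitzWith f).comp_lipschitzOnWith hφ).extend_real
  have hg0 : g base = 0 := by
    rw [← hfg hbase, Function.comp_apply, hφbase, LipZero.base_eq_zero]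
  set G := LipZero.ofLipschitzWith g hg hg0
  have hTG :
      (∑ i ∈ s, c i • (freeDelta M base (φ (p i)) - freeDelta M base (φ (q i)))) f = T G := by
    simp only [T, _root_.sum_apply, smul_apply, sub_apply, freeDelta_apply]
    refine sum_congr rfl fun i hi => ?_
    simp [G, LipZero.ofLipschitzWith, ← hfg (hp i hi), ← hfg (hq i hi)]
  rw [hTG]
  calc ‖T G‖ ≤ ‖T‖ * ‖G‖ := T.le_opNorm G
    _ ≤ ‖T‖ * ‖f‖ := by
      gcongr
      exact (LipZero.norm_ofLipschitzWith_le hg hg0).trans_eq (by simp [LipZero.norm_def])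

lemma exists_lipschitzOnWith_range_comp {ι : Type*} (x : ι → M) (σ : ι → ι)
    (hσ : ∀ i j, dist (x (σ i)) (x (σ j)) ≤ dist (x i) (x j)) :
    ∃ φ : M → M, LipschitzOnWith 1 φ (Set.range x) ∧ ∀ i, φ (x i) = x (σ i) := by
  classical
  let φ (y : M) : M := if h : ∃ i, x i = y then x (σ h.choose) else y
  have hφ (i : ι) : φ (x i) = x (σ i) := by
    have h : ∃ j, x j = x i := ⟨i, rfl⟩
    simp only [φ, dif_pos h]
    exact dist_le_zero.mp ((hσ _ _).trans (by rw [h.choose_spec, dist_self]))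
  refine ⟨φ, LipschitzOnWith.mk_one ?_, hφ⟩
  rintro _ ⟨i, rfl⟩ _ ⟨j, rfl⟩
  rw [hφ, hφ]
  exact hσ i j

end LipschitzFree

section NearestPredecessor

def nearestPred (x : ℕ → M) (k : ℕ) : ℕ :=
  if h : 0 < k then
    ((Finset.range k).exists_min_image (fun j => dist (x k) (x j))
      ⟨0, Finset.mem_range.mpr h⟩).choose
  else 0

lemma nearestPred_lt (x : ℕ → M) {k : ℕ} (hk : 0 < k) : nearestPred x k < k := by
  rw [nearestPred, dif_pos hk]
  exact Finset.mem_range.mp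
    ((Finset.range k).exists_min_image _ ⟨0, Finset.mem_range.mpr hk⟩).choose_spec.1

lemma dist_nearestPred_le (x : ℕ → M) {j k : ℕ} (hjk : j < k) :
    dist (x k) (x (nearestPred x k)) ≤ dist (x k) (x j) := by
  have hk : 0 < k := j.zero_le.trans_lt hjk
  rw [nearestPred, dif_pos hk]
  exact ((Finset.range k).exists_min_image (fun j => dist (x k) (x j))
    ⟨0, Finset.mem_range.mpr hk⟩).choose_spec.2 j (Finset.mem_range.mpr hjk)

lemma dist_nearestPred_le_dist [IsUltrametricDist M] (x : ℕ → M) {j k : ℕ} (hjk : j < k) :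
    dist (x (nearestPred x k)) (x j) ≤ dist (x k) (x j) :=
  (dist_triangle_max _ (x k) _).trans
    (max_le (by rw [dist_comm]; exact dist_nearestPred_le x hjk) le_rfl)

def retractIndex (x : ℕ → M) (N k : ℕ) : ℕ :=
  if k ≤ N then k else retractIndex x N (nearestPred x k)
termination_by k
decreasing_by exact nearestPred_lt x (by omega)

lemma retractIndex_of_le (x : ℕ → M) {N k : ℕ} (h : k ≤ N) : retractIndex x N k = k := by
  rw [retractIndex, if_pos h]

lemma retractIndex_of_lt (x : ℕ → M) {N k : ℕ} (h : N < k) :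
    retractIndex x N k = retractIndex x N (nearestPred x k) := by
  rw [retractIndex, if_neg h.not_ge]

lemma dist_retractIndex_le [IsUltrametricDist M] (x : ℕ → M) (N : ℕ) (k j : ℕ) :
    dist (x (retractIndex x N k)) (x (retractIndex x N j)) ≤ dist (x k) (x j) := by
  suffices h : ∀ k, ∀ j ≤ k,
      dist (x (retractIndex x N k)) (x (retractIndex x N j)) ≤ dist (x k) (x j) by
    rcases le_total j k with hjk | hkj
    · exact h k j hjk
    · simpa only [dist_comm] using h j k hkj
  intro k
  induction k using Nat.strong_induction_on with
  | _ k ih =>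
    intro j hjk
    rcases hjk.eq_or_lt with rfl | hjk
    · simp
    by_cases hkN : k ≤ N
    · rw [retractIndex_of_le x hkN, retractIndex_of_le x (hjk.le.trans hkN)]
    rw [retractIndex_of_lt x (not_le.mp hkN)]
    have hp := nearestPred_lt x (j.zero_le.trans_lt hjk)
    refine le_trans ?_ (dist_nearestPred_le_dist x hjk)
    rcases le_total j (nearestPred x k) with hj | hj
    · exact ih _ hp j hj
    · simpa only [dist_comm] using ih j hjk _ hj

end NearestPredecessor

section Molecules
open Finset

lemma freeDeltaF_base : freeDeltaF M base base = 0 :=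
  Subtype.ext freeDelta_base

lemma freeDeltaF_injective : Function.Injective (freeDeltaF M base) :=
  fun _ _ h => freeDelta_injective (congrArg Subtype.val h)

lemma lipschitzWith_freeDeltaF : LipschitzWith 1 (freeDeltaF M base) :=
  LipschitzWith.of_dist_le_mul fun x y => by
    rw [NNReal.coe_one, one_mul, dist_eq_norm]
    exact norm_freeDelta_sub_le x y

lemma dense_span_freeDeltaF :
    Dense (Submodule.span ℝ (Set.range (freeDeltaF M base)) : Set (FreeSpace M base)) := by
  have himage : Subtype.val ''
      (Submodule.span ℝ (Set.range (freeDeltaF M base)) : Set (FreeSpace M base)) =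
      (Submodule.span ℝ (Set.range (freeDelta M base)) :
        Set (NormedSpace.Dual ℝ (LipZero M base))) := by
    rw [← (FreeSpace M base).coe_subtype, ← Submodule.map_coe, Submodule.map_span,
      ← Set.range_comp]
    rfl
  intro v
  rw [closure_subtype, himage]
  exact v.2

lemma dense_of_forall_freeDeltaF_mem {V : Submodule ℝ (FreeSpace M base)} {S : Set M}
    (hS : Dense S) (hV : ∀ y ∈ S, freeDeltaF M base y ∈ V) :
    Dense (V : Set (FreeSpace M base)) := by
  have hcl (y : M) : freeDeltaF M base y ∈ V.topologicalClosure :=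
    hS.induction (fun y hy => V.le_topologicalClosure (hV y hy))
      (V.isClosed_topologicalClosure.preimage lipschitzWith_freeDeltaF.continuous) y
  rw [← dense_closure, ← Submodule.topologicalClosure_coe]
  exact dense_span_freeDeltaF.mono (Submodule.span_le.mpr (Set.range_subset_iff.mpr hcl))

variable (base) in
def molecule (x : ℕ → M) (n : ℕ) : FreeSpace M base :=
  freeDeltaF M base (x (n + 1)) - freeDeltaF M base (x (nearestPred x (n + 1)))

lemma coe_molecule (x : ℕ → M) (n : ℕ) :
    (molecule base x n : NormedSpace.Dual ℝ (LipZero M base)) =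
      freeDelta M base (x (n + 1)) - freeDelta M base (x (nearestPred x (n + 1))) := rfl

lemma molecule_ne_zero {x : ℕ → M} {n : ℕ} (hx : Set.InjOn x (Set.Iic (n + 1))) :
    molecule base x n ≠ 0 := by
  have hp := nearestPred_lt x n.succ_pos
  intro h
  have := hx (Set.mem_Iic.mpr le_rfl) (Set.mem_Iic.mpr hp.le)
    (freeDeltaF_injective (sub_eq_zero.mp h))
  omega

lemma freeDeltaF_mem_span_molecule {x : ℕ → M} (hx0 : x 0 = base) (k : ℕ) :
    freeDeltaF M base (x k) ∈ Submodule.span ℝ (molecule base x '' Set.Iio k) := by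
  induction k using Nat.strong_induction_on with
  | _ k ih =>
    rcases k with _ | k
    · rw [hx0, freeDeltaF_base]
      exact zero_mem _
    have hp := nearestPred_lt x k.succ_pos
    rw [← sub_add_cancel (freeDeltaF M base (x (k + 1)))
      (freeDeltaF M base (x (nearestPred x (k + 1))))]
    exact add_mem (Submodule.subset_span ⟨k, k.lt_succ_self, rfl⟩)
      (Submodule.span_mono (Set.image_mono (Set.Iio_subset_Iio hp.le)) (ih _ hp))

lemma isMonotoneBasic_molecule [IsUltrametricDist M] {x : ℕ → M} (hx0 : x 0 = base) :
    IsMonotoneBasic (molecule base x) := by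
  intro c n m hnm
  obtain ⟨φ, hφ, hφx⟩ :=
    exists_lipschitzOnWith_range_comp x (retractIndex x n) (dist_retractIndex_le x n)
  have hterm (i : ℕ) :
      c i • (freeDelta M base (φ (x (i + 1))) - freeDelta M base (φ (x (nearestPred x (i + 1))))) =
        if i < n then c i • (molecule base x i : NormedSpace.Dual ℝ (LipZero M base)) else 0 := by
    have hp := nearestPred_lt x (by omega : 0 < i + 1)
    rw [hφx, hφx, coe_molecule]
    split_ifs with hi
    · rw [retractIndex_of_le x (by omega : i + 1 ≤ n), retractIndex_of_le x (by omega)]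
    · rw [retractIndex_of_lt x (by omega : n < i + 1), sub_self, smul_zero]
  have hφ0 : φ base = base := by
    rw [← hx0, hφx, retractIndex_of_le x n.zero_le]
  have key := norm_sum_smul_freeDelta_sub_comp_le hφ ⟨0, hx0⟩ hφ0 (range m) c
    (p := fun i => x (i + 1)) (q := fun i => x (nearestPred x (i + 1)))
    (fun i _ => ⟨_, rfl⟩) (fun i _ => ⟨_, rfl⟩)
  simp only [hterm] at key
  rw [sum_range_ite_lt (e := fun i => (molecule base x i : NormedSpace.Dual ℝ (LipZero M base))),
    min_eq_left hnm] at key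
  simp only [← coe_molecule] at key
  simpa only [← Submodule.norm_coe, Submodule.coe_sum, Submodule.coe_smul] using key

end Molecules

section Enumerations
variable {α : Type*}

lemma exists_seq_bijOn_of_finite [Finite α] (base : α) :
    ∃ x : ℕ → α, x 0 = base ∧ Set.BijOn x (Set.Iio (Nat.card α)) Set.univ := by
  have : Nonempty α := ⟨base⟩
  have hn : 0 < Nat.card α := Nat.card_pos
  let e : Fin (Nat.card α) ≃ α := (Finite.equivFin α).symm
  let σ : Fin (Nat.card α) ≃ α := (Equiv.swap ⟨0, hn⟩ (e.symm base)).trans e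
  refine ⟨fun k => if h : k < Nat.card α then σ ⟨k, h⟩ else base, by simp [σ, hn],
    fun _ _ => trivial, fun a ha b hb hab => ?_, fun y _ => ⟨σ.symm y, (σ.symm y).2, by simp⟩⟩
  simpa [dif_pos (Set.mem_Iio.mp ha), dif_pos (Set.mem_Iio.mp hb)] using hab

lemma exists_seq_injective_denseRange [TopologicalSpace α] [T1Space α]
    [TopologicalSpace.SeparableSpace α] [Infinite α] (base : α) :
    ∃ x : ℕ → α, x 0 = base ∧ Function.Injective x ∧ DenseRange x := by
  obtain ⟨D, hDc, hDd⟩ := TopologicalSpace.exists_countable_dense α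
  have hDinf : D.Infinite := fun hfin => Set.infinite_univ (α := α) <| by
    rwa [← hDd.closure_eq, hfin.isClosed.closure_eq]
  let D' : Set α := insert base D
  have : Countable D' := (hDc.insert base).to_subtype
  have : Infinite D' := (hDinf.mono (Set.subset_insert base D)).to_subtype
  have := (nonempty_denumerable D').some
  let e : ℕ ≃ D' := (Denumerable.eqv _).symm
  let σ : ℕ ≃ D' := (Equiv.swap 0 (e.symm ⟨base, Set.mem_insert _ _⟩)).trans e
  refine ⟨fun k => σ k, by simp [σ], Subtype.val_injective.comp σ.injective, ?_⟩
  exact hDd.mono fun y hy => ⟨σ.symm ⟨y, Set.mem_insert_of_mem _ hy⟩, by simp⟩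

end Enumerations

section Ultrametric
variable [IsUltrametricDist M]

theorem hasMonotoneSchauderBasis_freeSpace_of_finite [Finite M] (base : M) :
    HasMonotoneSchauderBasis (FreeSpace M base) := by
  obtain ⟨x, hx0, hx⟩ := exists_seq_bijOn_of_finite base
  have : Nonempty M := ⟨base⟩
  obtain ⟨d, hd⟩ : ∃ d, Nat.card M = d + 1 := Nat.exists_eq_succ_of_ne_zero Nat.card_pos.ne'
  rw [hd] at hx
  set V := Submodule.span ℝ (Set.range fun i : Fin d => molecule base x i)
  have hV : Dense (V : Set (FreeSpace M base)) := by
    refine dense_of_forall_freeDeltaF_mem dense_univ fun y _ => ?_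
    obtain ⟨k, hk, rfl⟩ := hx.surjOn (Set.mem_univ y)
    refine Submodule.span_mono ?_ (freeDeltaF_mem_span_molecule hx0 k)
    rintro _ ⟨i, hi, rfl⟩
    exact ⟨⟨i, hi.trans_le (Nat.lt_succ_iff.mp hk)⟩, rfl⟩
  refine (isMonotoneBasic_molecule hx0).hasMonotoneSchauderBasis_of_span_fin (d := d)
    (fun n hn => molecule_ne_zero (hx.injOn.mono (Set.Iic_subset_Iio.mpr (by omega)))) ?_
  have : FiniteDimensional ℝ V := FiniteDimensional.span_of_finite ℝ (Set.finite_range _)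
  change V = ⊤
  rw [← V.closed_of_finiteDimensional.submodule_topologicalClosure_eq]
  exact Submodule.dense_iff_topologicalClosure_eq_top.mp hV

theorem hasMonotoneSchauderBasis_freeSpace_of_infinite [TopologicalSpace.SeparableSpace M]
    [Infinite M] (base : M) : HasMonotoneSchauderBasis (FreeSpace M base) := by
  obtain ⟨x, hx0, hinj, hdense⟩ := exists_seq_injective_denseRange base
  refine (isMonotoneBasic_molecule hx0).hasMonotoneSchauderBasis
    (fun n => molecule_ne_zero hinj.injOn) (dense_of_forall_freeDeltaF_mem hdense ?_)
  rintro _ ⟨k, rfl⟩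
  exact Submodule.span_mono (Set.image_subset_range _ _) (freeDeltaF_mem_span_molecule hx0 k)

end Ultrametric

/-- **(Theorem 1 / Theorem `t:schauderUltrametric`).** The Lipschitz-free space over a
separable ultrametric space (with distinguished point `base`) has a monotone Schauder
basis. -/
theorem freeSpace_ultrametric_hasMonotoneSchauderBasis
    (M : Type*) [MetricSpace M] [TopologicalSpace.SeparableSpace M]
    (hU : ∀ x y z : M, dist x z ≤ max (dist x y) (dist y z)) (base : M) :
    HasMonotoneSchauderBasis (FreeSpace M base) := by
  have : IsUltrametricDist M := ⟨hU⟩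
  rcases finite_or_infinite M with hM | hM
  · exact hasMonotoneSchauderBasis_freeSpace_of_finite base
  · exact hasMonotoneSchauderBasis_freeSpace_of_infinite base
end
end

section
/- Let (M,d) be a separable ultrametric space and let (sₙ)ₙ∈ℕ be a one-to-one sequence of points of M whose set of terms is dense in M. For n ∈ ℕ put Sₙ := {s₁, …, sₙ}, let iₙ(x) be the least k ≤ n such that d(x, s_k) = dist(x, Sₙ), and define rₙ : M → M by rₙ(x) := s_{iₙ(x)}. Then for every n ∈ ℕ: rₙ is a 1-Lipschitz retraction of M onto Sₙ, and rₙ ∘ r_{n+1} = rₙ. -/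
/-- Let `(M,d)` be a separable ultrametric space and `(sₙ)` a one-to-one dense sequence in
`M`. For `n ∈ ℕ` put `Sₙ := {s_k : k ≤ n}`, let `iₙ(x)` be the least `k ≤ n` with
`d(x, s_k) = dist(x, Sₙ)`, and define `rₙ(x) := s_{iₙ(x)}`. Then each `rₙ` is a
1-Lipschitz retraction of `M` onto `Sₙ`, and `rₙ ∘ r_{n+1} = rₙ`. -/
theorem nearest_point_retractions {M : Type*} [MetricSpace M]
    [TopologicalSpace.SeparableSpace M]
    (hU : ∀ x y z : M, dist x z ≤ max (dist x y) (dist y z))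
    (s : ℕ → M) (hinj : Function.Injective s) (hdense : DenseRange s)
    (i : ℕ → M → ℕ)
    (hi : ∀ (n : ℕ) (x : M),
      IsLeast {k : ℕ | k ≤ n ∧ dist x (s k) = Metric.infDist x (s '' Set.Iic n)} (i n x))
    (r : ℕ → M → M) (hr : ∀ (n : ℕ) (x : M), r n x = s (i n x)) :
    ∀ n : ℕ,
      LipschitzWith 1 (r n) ∧
      Set.range (r n) = s '' Set.Iic n ∧
      (∀ k ≤ n, r n (s k) = s k) ∧
      r n ∘ r (n + 1) = r n := by
  have hin : ∀ n (x : M), i n x ≤ n := fun n x => (hi n x).1.1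
  have hdist : ∀ n (x : M), dist x (s (i n x)) = Metric.infDist x (s '' Set.Iic n) :=
    fun n x => (hi n x).1.2
  have hle : ∀ n k (x : M), k ≤ n → Metric.infDist x (s '' Set.Iic n) ≤ dist x (s k) :=
    fun n k x hk => Metric.infDist_le_dist_of_mem ⟨k, hk, rfl⟩
  -- key lemma: if y is strictly closer to x than S_n, distances to S_n coincide
  have keyd : ∀ n (x y : M), dist x y < Metric.infDist x (s '' Set.Iic n) →
      ∀ k, k ≤ n → dist y (s k) = dist x (s k) := by
    intro n x y h k hk
    have h1 : dist x y < dist x (s k) := lt_of_lt_of_le h (hle n k x hk)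
    have h2 : dist x (s k) ≤ dist y (s k) := by
      rcases le_total (dist x y) (dist y (s k)) with hc | hc
      · simpa [max_eq_right hc] using hU x y (s k)
      · have := hU x y (s k)
        rw [max_eq_left hc] at this
        linarith
    have h3 : dist y (s k) ≤ dist x (s k) := by
      have := hU y x (s k)
      rw [dist_comm y x, max_eq_right h1.le] at this
      exact this
    exact le_antisymm h3 h2
  have keyi : ∀ n (x y : M), dist x y < Metric.infDist x (s '' Set.Iic n) →
      i n x = i n y := by
    intro n x y h
    have hdy := keyd n x y h
    have hinf : Metric.infDist y (s '' Set.Iic n) = Metric.infDist x (s '' Set.Iic n) := by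
      apply le_antisymm
      · calc Metric.infDist y (s '' Set.Iic n) ≤ dist y (s (i n x)) :=
              Metric.infDist_le_dist_of_mem ⟨i n x, hin n x, rfl⟩
          _ = dist x (s (i n x)) := hdy _ (hin n x)
          _ = _ := hdist n x
      · calc Metric.infDist x (s '' Set.Iic n) ≤ dist x (s (i n y)) := hle n _ x (hin n y)
          _ = dist y (s (i n y)) := (hdy _ (hin n y)).symm
          _ = _ := hdist n y
    have hset : {k : ℕ | k ≤ n ∧ dist x (s k) = Metric.infDist x (s '' Set.Iic n)} =
        {k : ℕ | k ≤ n ∧ dist y (s k) = Metric.infDist y (s '' Set.Iic n)} := by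
      ext k
      simp only [Set.mem_setOf_eq]
      constructor
      · rintro ⟨hk, hd⟩
        exact ⟨hk, by rw [hdy k hk, hinf]; exact hd⟩
      · rintro ⟨hk, hd⟩
        exact ⟨hk, by rw [← hdy k hk, ← hinf]; exact hd⟩
    exact (hi n x).unique (hset ▸ hi n y)
  -- retraction property
  have hfix : ∀ n k, k ≤ n → r n (s k) = s k := by
    intro n k hk
    have h0 : Metric.infDist (s k) (s '' Set.Iic n) = 0 := by
      apply le_antisymm _ Metric.infDist_nonneg
      simpa using hle n k (s k) hk
    have := hdist n (s k)
    rw [h0, dist_eq_zero] at this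
    rw [hr]; exact this.symm
  intro n
  refine ⟨?_, ?_, fun k hk => hfix n k hk, ?_⟩
  · -- Lipschitz
    apply LipschitzWith.of_dist_le_mul
    intro x y
    rw [NNReal.coe_one, one_mul, hr, hr]
    rcases lt_or_ge (dist x y) (Metric.infDist x (s '' Set.Iic n)) with h | h
    · rw [keyi n x y h]
      simpa using dist_nonneg
    · have hax : dist (s (i n x)) x ≤ dist x y := by
        rw [dist_comm]; rw [hdist n x] at *; exact (hdist n x) ▸ h
      have hya : dist y (s (i n x)) ≤ dist x y := by
        have := hU y x (s (i n x))
        have h2 : dist x (s (i n x)) ≤ dist x y := (hdist n x) ▸ h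
        rw [dist_comm y x] at this
        exact this.trans (max_le le_rfl h2)
      have hyb : dist y (s (i n y)) ≤ dist x y := by
        have := (hdist n y) ▸ hle n (i n x) y (hin n x)
        exact this.trans hya
      have hxb : dist x (s (i n y)) ≤ dist x y :=
        (hU x y (s (i n y))).trans (max_le le_rfl hyb)
      have := hU (s (i n x)) x (s (i n y))
      rw [dist_comm (s (i n x)) x] at this
      exact this.trans (max_le ((hdist n x).le.trans h) hxb)
  · -- range
    apply Set.eq_of_subset_of_subset
    · rintro _ ⟨x, rfl⟩
      exact ⟨i n x, hin n x, (hr n x).symm⟩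
    · rintro _ ⟨k, hk, rfl⟩
      exact ⟨s k, hfix n k hk⟩
  · -- compatibility
    funext x
    simp only [Function.comp_apply]
    have hmono : Metric.infDist x (s '' Set.Iic (n + 1)) ≤ Metric.infDist x (s '' Set.Iic n) := by
      rw [← hdist n x]
      exact Metric.infDist_le_dist_of_mem ⟨i n x, (hin n x).trans (Nat.le_succ n), rfl⟩
    rcases le_or_gt (i (n + 1) x) n with hm | hm
    · -- the nearest point at stage n+1 already belongs to S_n
      have heq : dist x (s (i (n + 1) x)) = Metric.infDist x (s '' Set.Iic n) := by
        apply le_antisymm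
        · rw [hdist (n + 1) x]; exact hmono
        · exact hle n _ x hm
      have h1 : i n x ≤ i (n + 1) x := (hi n x).2 ⟨hm, heq⟩
      have h2 : i (n + 1) x ≤ i n x := by
        apply (hi (n + 1) x).2
        refine ⟨(hin n x).trans (Nat.le_succ n), ?_⟩
        rw [hdist n x, ← heq, hdist (n + 1) x]
      have : i (n + 1) x = i n x := le_antisymm h2 h1
      rw [hr (n + 1) x, this, hfix n (i n x) (hin n x)]
      exact (hr n x).symm
    · -- new point: strictly closer
      have hlt : dist x (s (i (n + 1) x)) < Metric.infDist x (s '' Set.Iic n) := by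
        rcases lt_or_eq_of_le ((hdist (n + 1) x) ▸ hmono) with h | h
        · exact h
        · exfalso
          have : i (n + 1) x ≤ i n x := by
            apply (hi (n + 1) x).2
            refine ⟨(hin n x).trans (Nat.le_succ n), ?_⟩
            rw [hdist n x, ← h, hdist (n + 1) x]
          have h3 := hin n x
          omega
      have := keyi n x (s (i (n + 1) x)) hlt
      rw [hr (n + 1) x, hr n (s (i (n + 1) x)), ← this, ← hr n x]
end

section
/- Let (M,d) be a metric space and suppose that for all x,y ∈ M there is given an isometric embedding φ_{x,y} : [0, d(x,y)] → M with φ_{x,y}(0) = x and φ_{x,y}(d(x,y)) = y. Write [x,y] := φ_{x,y}([0, d(x,y)]) and assume that for all x,y,z ∈ M: (i) [x,y] = [y,x]; (ii) if [x,z] ∩ [z,y] = {z} then z ∈ [x,y]; (iii) for every i ∈ (0, d(x,y)), [x, φ_{x,y}(i)] ⊆ φ_{x,y}([0,i]) and [φ_{x,y}(i), y] ⊆ φ_{x,y}([i, d(x,y)]). Then for all x,y ∈ M, every isometric embedding τ : [0, d(x,y)] → M with τ(0) = x and τ(d(x,y)) = y equals φ_{x,y}; consequently (M,d) is an ℝ-tree.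 -/
/-- A metric space is an ℝ-tree if between any two points `x, y` there is a unique
isometric embedding `φ : [0, d(x,y)] → T` with `φ(0) = x` and `φ(d(x,y)) = y`. -/
def IsRTree (T : Type*) [MetricSpace T] : Prop :=
  ∀ x y : T, ∃! φ : Set.Icc (0 : ℝ) (dist x y) → T,
    Isometry φ ∧ φ ⟨0, le_refl 0, dist_nonneg⟩ = x ∧ φ ⟨dist x y, dist_nonneg, le_refl _⟩ = y

/-- Suppose that in a metric space `(M,d)` we are given, for all `x, y`, an isometric
embedding `φ_{x,y} : [0,d(x,y)] → M` joining `x` to `y`, such that the segments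
`[x,y] := φ_{x,y}([0,d(x,y)])` satisfy: (i) `[x,y] = [y,x]`;
(ii) `[x,z] ∩ [z,y] = {z} → z ∈ [x,y]`; (iii) for `i ∈ (0,d(x,y))`,
`[x, φ_{x,y}(i)] ⊆ φ_{x,y}([0,i])` and `[φ_{x,y}(i), y] ⊆ φ_{x,y}([i,d(x,y)])`.
Then every isometric embedding `τ : [0,d(x,y)] → M` with `τ(0) = x` and `τ(d(x,y)) = y`
agrees with `φ_{x,y}`; consequently `(M,d)` is an ℝ-tree. -/
theorem unique_geodesics_of_segment_conditions {M : Type*} [MetricSpace M]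
    (φ : M → M → ℝ → M)
    (hiso : ∀ x y : M, ∀ a ∈ Set.Icc 0 (dist x y), ∀ b ∈ Set.Icc 0 (dist x y),
      dist (φ x y a) (φ x y b) = |a - b|)
    (hzero : ∀ x y : M, φ x y 0 = x)
    (hone : ∀ x y : M, φ x y (dist x y) = y)
    (hsymm : ∀ x y : M, φ x y '' Set.Icc 0 (dist x y) = φ y x '' Set.Icc 0 (dist y x))
    (hmid : ∀ x y z : M,
      φ x z '' Set.Icc 0 (dist x z) ∩ φ z y '' Set.Icc 0 (dist z y) = {z} →
      z ∈ φ x y '' Set.Icc 0 (dist x y))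
    (hsplit : ∀ x y : M, ∀ i ∈ Set.Ioo 0 (dist x y),
      φ x (φ x y i) '' Set.Icc 0 (dist x (φ x y i)) ⊆ φ x y '' Set.Icc 0 i ∧
      φ (φ x y i) y '' Set.Icc 0 (dist (φ x y i) y) ⊆ φ x y '' Set.Icc i (dist x y)) :
    (∀ (x y : M) (τ : ℝ → M),
      (∀ a ∈ Set.Icc 0 (dist x y), ∀ b ∈ Set.Icc 0 (dist x y),
        dist (τ a) (τ b) = |a - b|) →
      τ 0 = x → τ (dist x y) = y →
      ∀ t ∈ Set.Icc 0 (dist x y), τ t = φ x y t) ∧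
    IsRTree M := by

  have hd0 : ∀ x y : M, (0:ℝ) ≤ dist x y := fun x y => dist_nonneg
  have main : ∀ (x y : M) (τ : ℝ → M),
      (∀ a ∈ Set.Icc 0 (dist x y), ∀ b ∈ Set.Icc 0 (dist x y),
        dist (τ a) (τ b) = |a - b|) →
      τ 0 = x → τ (dist x y) = y →
      ∀ t ∈ Set.Icc 0 (dist x y), τ t = φ x y t := by
    intro x y τ hτ h0 h1 t ht
    obtain ⟨ht0, htd⟩ := ht
    set z := τ t with hz
    have hxz : dist x z = t := by
      have h := hτ 0 ⟨le_refl 0, hd0 x y⟩ t ⟨ht0, htd⟩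
      rw [h0, zero_sub, abs_neg, abs_of_nonneg ht0] at h
      exact h
    have hzy : dist z y = dist x y - t := by
      have h := hτ t ⟨ht0, htd⟩ (dist x y) ⟨hd0 x y, le_refl _⟩
      rw [h1, abs_of_nonpos (by linarith)] at h
      rw [h]; ring
    have hkey : φ x z '' Set.Icc 0 (dist x z) ∩ φ z y '' Set.Icc 0 (dist z y) = {z} := by
      rw [Set.eq_singleton_iff_unique_mem]
      constructor
      · exact ⟨⟨dist x z, ⟨dist_nonneg, le_refl _⟩, hone x z⟩,
          ⟨0, ⟨le_refl 0, dist_nonneg⟩, hzero z y⟩⟩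
      · rintro w ⟨⟨s, hs, rfl⟩, ⟨r, hr, hw⟩⟩
        have h1' : dist x (φ x z s) = s := by
          have h := hiso x z 0 ⟨le_refl 0, dist_nonneg⟩ s hs
          rw [hzero x z, zero_sub, abs_neg, abs_of_nonneg hs.1] at h
          exact h
        have h2' : dist (φ x z s) z = dist x z - s := by
          have h := hiso x z s hs (dist x z) ⟨dist_nonneg, le_refl _⟩
          rw [hone x z, abs_of_nonpos (by linarith [hs.2])] at h
          rw [h]; ring
        have h3' : dist z (φ x z s) = r := by
          have h := hiso z y 0 ⟨le_refl 0, dist_nonneg⟩ r hr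
          rw [hzero z y, zero_sub, abs_neg, abs_of_nonneg hr.1, hw] at h
          exact h
        have h4' : dist (φ x z s) y = dist z y - r := by
          have h := hiso z y r hr (dist z y) ⟨dist_nonneg, le_refl _⟩
          rw [hone z y, abs_of_nonpos (by linarith [hr.2]), hw] at h
          rw [h]; ring
        have htri : dist x y ≤ dist x (φ x z s) + dist (φ x z s) y := dist_triangle _ _ _
        have hcomm : dist (φ x z s) z = dist z (φ x z s) := dist_comm _ _
        have hr0 : r = 0 := by linarith [hr.1]
        rw [← hw, hr0, hzero z y]
    obtain ⟨i, hi, hiz⟩ := hmid x y z hkey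
    have hdi : dist x z = i := by
      have h := hiso x y 0 ⟨le_refl 0, hd0 x y⟩ i hi
      rw [hzero x y, zero_sub, abs_neg, abs_of_nonneg hi.1, hiz] at h
      exact h
    have : i = t := by rw [← hdi, hxz]
    rw [← hiz, this]
  refine ⟨main, ?_⟩
  intro x y
  refine ⟨fun p => φ x y p.1, ⟨?_, ?_, ?_⟩, ?_⟩
  · apply Isometry.of_dist_eq
    intro a b
    rw [Subtype.dist_eq, Real.dist_eq,
      hiso x y a.1 a.2 b.1 b.2]
  · exact hzero x y
  · exact hone x y
  · rintro ψ ⟨hψiso, hψ0, hψ1⟩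
    funext p
    set τ : ℝ → M := fun t =>
      if h : t ∈ Set.Icc (0:ℝ) (dist x y) then ψ ⟨t, h⟩ else x with hτdef
    have hmem0 : (0:ℝ) ∈ Set.Icc (0:ℝ) (dist x y) := ⟨le_refl 0, hd0 x y⟩
    have hmemd : dist x y ∈ Set.Icc (0:ℝ) (dist x y) := ⟨hd0 x y, le_refl _⟩
    have hτiso : ∀ a ∈ Set.Icc 0 (dist x y), ∀ b ∈ Set.Icc 0 (dist x y),
        dist (τ a) (τ b) = |a - b| := by
      intro a ha b hb
      simp only [hτdef, dif_pos ha, dif_pos hb]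
      rw [hψiso.dist_eq, Subtype.dist_eq, Real.dist_eq]
    have hτ0 : τ 0 = x := by simp only [hτdef, dif_pos hmem0]; exact hψ0
    have hτ1 : τ (dist x y) = y := by simp only [hτdef, dif_pos hmemd]; exact hψ1
    have := main x y τ hτiso hτ0 hτ1 p.1 p.2
    simpa only [hτdef, dif_pos p.2] using this
end

section
/- Let (M,d) be an ultrametric space, and on Y := M × [0,∞) define ρ((m,i),(n,j)) := 2·max{i, j, d(m,n)/2} − (i + j). Then ρ is a pseudometric on Y; ρ((m,i),(n,j)) = 0 if and only if i = j and i ≥ d(m,n)/2; and ρ((m,0),(n,0)) = d(m,n) for all m,n ∈ M, so that m ↦ (m,0) induces an isometric embedding of M into the metric quotient of (Y,ρ). -/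
/-- Let `(M,d)` be an ultrametric space, and on `Y := M × [0,∞)` define
`ρ((m,i),(n,j)) := 2·max{i, j, d(m,n)/2} − (i + j)`. Then `ρ` is a pseudometric on `Y`;
`ρ((m,i),(n,j)) = 0` iff `i = j` and `i ≥ d(m,n)/2`; and `ρ((m,0),(n,0)) = d(m,n)`
(so `m ↦ (m,0)` induces an isometric embedding of `M` into the metric quotient). -/
theorem rho_is_pseudometric {M : Type*} [MetricSpace M]
    (hU : ∀ x y z : M, dist x z ≤ max (dist x y) (dist y z))
    (ρ : M × ℝ → M × ℝ → ℝ)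
    (hρ : ∀ p q : M × ℝ, ρ p q = 2 * max (max p.2 q.2) (dist p.1 q.1 / 2) - (p.2 + q.2)) :
    (∀ (m : M) (i : ℝ), 0 ≤ i → ρ (m, i) (m, i) = 0) ∧
      (∀ p q : M × ℝ, ρ p q = ρ q p) ∧
      (∀ p q r : M × ℝ, 0 ≤ p.2 → 0 ≤ q.2 → 0 ≤ r.2 → ρ p r ≤ ρ p q + ρ q r) ∧
      (∀ (m n : M) (i j : ℝ), 0 ≤ i → 0 ≤ j →
        (ρ (m, i) (n, j) = 0 ↔ i = j ∧ dist m n / 2 ≤ i)) ∧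
      (∀ m n : M, ρ (m, 0) (n, 0) = dist m n) := by
  refine ⟨?_, ?_, ?_, ?_, ?_⟩
  · intro m i hi
    simp [hρ, dist_self]
    rw [max_eq_left (by linarith)]
    ring
  · intro p q
    rw [hρ, hρ, dist_comm, max_comm p.2 q.2, add_comm p.2 q.2]
  · intro p q r hp hq hr
    rw [hρ, hρ, hρ]
    set B := max (max p.2 q.2) (dist p.1 q.1 / 2) with hB
    set C := max (max q.2 r.2) (dist q.1 r.1 / 2) with hC
    have hBj : q.2 ≤ B := le_max_of_le_left (le_max_right _ _)
    have hCj : q.2 ≤ C := le_max_of_le_left (le_max_left _ _)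
    have hBi : p.2 ≤ B := le_max_of_le_left (le_max_left _ _)
    have hCk : r.2 ≤ C := le_max_of_le_left (le_max_right _ _)
    have hd : dist p.1 r.1 / 2 ≤ max B C := by
      have := hU p.1 q.1 r.1
      rcases le_max_iff.mp (le_refl (max (dist p.1 q.1) (dist q.1 r.1))) with _ | _
      all_goals
        rcases max_cases (dist p.1 q.1) (dist q.1 r.1) with ⟨he, _⟩ | ⟨he, _⟩
        · exact le_max_of_le_left (le_trans (by linarith [he ▸ this]) (le_max_right _ _))
        · exact le_max_of_le_right (le_trans (by linarith [he ▸ this]) (le_max_right _ _))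
    have hA : max (max p.2 r.2) (dist p.1 r.1 / 2) ≤ B + C - q.2 := by
      apply max_le (max_le (by linarith) (by linarith))
      rcases max_cases B C with ⟨he, _⟩ | ⟨he, _⟩ <;> linarith [he ▸ hd]
    linarith
  · intro m n i j hi hj
    rw [hρ]
    constructor
    · intro h
      have hmax : max (max i j) (dist m n / 2) = (i + j) / 2 := by
        simp only at h; linarith
      have h1 : max i j ≤ (i + j) / 2 := hmax ▸ le_max_left _ _
      have h2 : dist m n / 2 ≤ (i + j) / 2 := hmax ▸ le_max_right _ _
      have hij : i = j := by
        rcases max_cases i j with ⟨he, _⟩ | ⟨he, _⟩ <;> linarith [he ▸ h1]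
      exact ⟨hij, by linarith⟩
    · rintro ⟨rfl, hd⟩
      simp only
      rw [max_self, max_eq_left hd]
      ring
  · intro m n
    rw [hρ]
    simp only
    rw [max_self, max_eq_right (by positivity)]
    ring
end

section
/- Let (M,d) be a 2ⁿ-valued ultrametric space and define ρ((m,i),(n,j)) := 2·max{i, j, d(m,n)/2} − (i + j) for m,n ∈ M and i,j ≥ 0. Let m_a, n_a, m_b, n_b ∈ M with m_a ≠ n_a and m_b ≠ n_b, and suppose that the pairs (m_a, d(m_a,n_a)/2) and (m_b, d(m_b,n_b)/2) represent distinct points, i.e. it is not the case that d(m_a,n_a) = d(m_b,n_b) and d(m_a,m_b) ≤ d(m_a,n_a). Then d(m_a, m_b) ≤ 4·ρ((m_a, d(m_a,n_a)/2), (m_b, d(m_b,n_b)/2)). -/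
lemma two_mul_le_of_pow2_lt (m n : ℤ) (h : (2:ℝ)^m < (2:ℝ)^n) :
    2 * (2:ℝ)^m ≤ (2:ℝ)^n := by
  have hmn : m < n := by
    exact_mod_cast (zpow_lt_zpow_iff_right₀ (by norm_num : (1:ℝ) < 2)).mp h
  have : (2:ℝ)^(m+1) ≤ (2:ℝ)^n :=
    zpow_le_zpow_right₀ (by norm_num) (by omega)
  calc 2 * (2:ℝ)^m = (2:ℝ)^(m+1) := by
        rw [zpow_add_one₀ (by norm_num : (2:ℝ) ≠ 0)]; ring
    _ ≤ (2:ℝ)^n := this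

/-- Let `(M,d)` be a `2ⁿ`-valued ultrametric space and
`ρ((m,i),(n,j)) := 2·max{i, j, d(m,n)/2} − (i + j)`. If `m_a ≠ n_a`, `m_b ≠ n_b` and the
pairs `(m_a, d(m_a,n_a)/2)`, `(m_b, d(m_b,n_b)/2)` represent distinct points (i.e. it is
not the case that `d(m_a,n_a) = d(m_b,n_b)` and `d(m_a,m_b) ≤ d(m_a,n_a)`), then
`d(m_a,m_b) ≤ 4·ρ((m_a, d(m_a,n_a)/2), (m_b, d(m_b,n_b)/2))`. -/
theorem dist_le_four_mul_rho {M : Type*} [MetricSpace M]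
    (hU : ∀ x y z : M, dist x z ≤ max (dist x y) (dist y z))
    (h2 : ∀ x y : M, x ≠ y → ∃ n : ℤ, dist x y = (2 : ℝ) ^ n)
    (ma na mb nb : M) (ha : ma ≠ na) (hb : mb ≠ nb)
    (hdistinct : ¬(dist ma na = dist mb nb ∧ dist ma mb ≤ dist ma na)) :
    dist ma mb ≤
      4 * (2 * max (max (dist ma na / 2) (dist mb nb / 2)) (dist ma mb / 2) -
        (dist ma na / 2 + dist mb nb / 2)) := by
  obtain ⟨p, hp⟩ := h2 ma na ha
  obtain ⟨q, hq⟩ := h2 mb nb hb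
  set a := dist ma na with hA
  set b := dist mb nb with hB
  set c := dist ma mb with hC
  have hc0 : 0 ≤ c := dist_nonneg
  rcases le_or_gt c (max a b) with hle | hlt
  · rcases lt_trichotomy a b with hab | hab | hab
    · have h2a : 2 * a ≤ b := by rw [hp, hq] at hab ⊢; exact two_mul_le_of_pow2_lt p q hab
      have hcb : c ≤ b := le_trans hle (by simp [max_le_iff, le_of_lt hab])
      have hm1 : max (a/2) (b/2) = b/2 := max_eq_right (by linarith)
      have hm2 : max (max (a/2) (b/2)) (c/2) = b/2 := by
        rw [hm1]; exact max_eq_left (by linarith)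
      rw [hm2]; linarith
    · exact absurd ⟨hab, le_trans hle (by simp [hab])⟩ hdistinct
    · have h2b : 2 * b ≤ a := by rw [hp, hq] at hab ⊢; exact two_mul_le_of_pow2_lt q p hab
      have hca : c ≤ a := le_trans hle (by simp [max_le_iff, le_of_lt hab])
      have hm1 : max (a/2) (b/2) = a/2 := max_eq_left (by linarith)
      have hm2 : max (max (a/2) (b/2)) (c/2) = a/2 := by
        rw [hm1]; exact max_eq_left (by linarith)
      rw [hm2]; linarith
  · have hac : a < c := lt_of_le_of_lt (le_max_left _ _) hlt
    have hbc : b < c := lt_of_le_of_lt (le_max_right _ _) hlt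
    have hmm : ma ≠ mb := by
      intro h; rw [hC, h, dist_self] at hac; exact absurd hac (not_lt.mpr dist_nonneg)
    obtain ⟨r, hr⟩ := h2 ma mb hmm
    have h2a : 2 * a ≤ c := by rw [hp, hC, hr] at hac ⊢; exact two_mul_le_of_pow2_lt p r hac
    have h2b : 2 * b ≤ c := by rw [hq, hC, hr] at hbc ⊢; exact two_mul_le_of_pow2_lt q r hbc
    have hm2 : max (max (a/2) (b/2)) (c/2) = c/2 := by
      apply max_eq_right; simp only [max_le_iff]; constructor <;> linarith
    rw [hm2]; linarith
end

section
/- Let (M,d) be a 2ⁿ-valued ultrametric space. Then there exists an ℝ-tree (T,ρ) such that: (i) M embeds isometrically into T; (ii) identifying M with its image, the set Br(T) ∪ M is closed in T and contains no segment [x,y] with x ≠ y; (iii) M is a 4-Lipschitz retract of Br(T) ∪ M, i.e., there exists a 4-Lipschitz retraction r : Br(T) ∪ M → M. Moreover, if M is separable then T can be taken separable. -/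
/-- The segment `[x,y]` in a metric space: the union of the images of all isometric
embeddings of `[0,d(x,y)]` joining `x` to `y` (in an ℝ-tree there is exactly one). -/
def rTreeSeg {T : Type*} [MetricSpace T] (x y : T) : Set T :=
  {v | ∃ φ : Set.Icc (0 : ℝ) (dist x y) → T,
    Isometry φ ∧ φ ⟨0, le_refl 0, dist_nonneg⟩ = x ∧
      φ ⟨dist x y, dist_nonneg, le_refl _⟩ = y ∧ v ∈ Set.range φ}

/-- The set of branching points of a metric space (intended for ℝ-trees): points `v` for
which there are `x₁, x₂, x₃ ≠ v` with `[xᵢ, v] ∩ [xⱼ, v] = {v}` for all `i ≠ j`. -/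
def branchingPoints (T : Type*) [MetricSpace T] : Set T :=
  {v | ∃ x₁ x₂ x₃ : T, x₁ ≠ v ∧ x₂ ≠ v ∧ x₃ ≠ v ∧
    rTreeSeg x₁ v ∩ rTreeSeg x₂ v = {v} ∧
    rTreeSeg x₁ v ∩ rTreeSeg x₃ v = {v} ∧
    rTreeSeg x₂ v ∩ rTreeSeg x₃ v = {v}}



universe u

@[ext]
structure Comb (M : Type u) : Type u where
  pt : M
  ht : ℝ
  ht0 : 0 ≤ ht

namespace Comb

variable {M : Type u} [MetricSpace M]

/-- twice the merge height -/
def L (a b : Comb M) : ℝ := max (dist a.pt b.pt) (max (2*a.ht) (2*b.ht))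

def cd (a b : Comb M) : ℝ := L a b - a.ht - b.ht

lemma L_comm (a b : Comb M) : L a b = L b a := by
  unfold L; rw [dist_comm, max_comm (2*a.ht)]

lemma cd_comm (a b : Comb M) : cd a b = cd b a := by
  unfold cd; rw [L_comm]; ring

lemma le_L_left (a b : Comb M) : 2*a.ht ≤ L a b := le_max_of_le_right (le_max_left _ _)
lemma le_L_right (a b : Comb M) : 2*b.ht ≤ L a b := le_max_of_le_right (le_max_right _ _)
lemma dist_le_L (a b : Comb M) : dist a.pt b.pt ≤ L a b := le_max_left _ _

lemma cd_self (a : Comb M) : cd a a = 0 := by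
  unfold cd L
  rw [dist_self]
  have : max (0:ℝ) (max (2*a.ht) (2*a.ht)) = 2*a.ht := by
    rw [max_self]; exact max_eq_right (by linarith [a.ht0])
  rw [this]; ring

lemma abs_sub_ht_le_cd (a b : Comb M) : |a.ht - b.ht| ≤ cd a b := by
  rw [abs_sub_le_iff]
  constructor
  · have := le_L_left a b; unfold cd; linarith [b.ht0]
  · have := le_L_right a b; unfold cd; linarith [a.ht0]

lemma cd_nonneg (a b : Comb M) : 0 ≤ cd a b :=
  le_trans (abs_nonneg _) (abs_sub_ht_le_cd a b)

lemma cd_eq_zero_iff {a b : Comb M} :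
    cd a b = 0 ↔ a.ht = b.ht ∧ dist a.pt b.pt ≤ 2*a.ht := by
  constructor
  · intro h
    have h1 : |a.ht - b.ht| ≤ 0 := h ▸ abs_sub_ht_le_cd a b
    have h2 : a.ht = b.ht := by
      have := abs_nonneg (a.ht - b.ht)
      have : |a.ht - b.ht| = 0 := le_antisymm h1 this
      have := abs_eq_zero.mp this; linarith
    refine ⟨h2, ?_⟩
    have := dist_le_L a b
    unfold cd at h
    nlinarith [h2]
  · rintro ⟨h1, h2⟩
    unfold cd L
    rw [← h1]
    have : max (dist a.pt b.pt) (max (2*a.ht) (2*a.ht)) = 2*a.ht := by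
      rw [max_self]; exact max_eq_right h2
    rw [this]; ring

section Ultra
variable (hU : ∀ x y z : M, dist x z ≤ max (dist x y) (dist y z))
include hU

lemma L_ultra (a b c : Comb M) : L a c ≤ max (L a b) (L b c) := by
  unfold L
  refine max_le ?_ (max_le ?_ ?_)
  · calc dist a.pt c.pt ≤ max (dist a.pt b.pt) (dist b.pt c.pt) := hU _ _ _
      _ ≤ _ := max_le_max (le_max_left _ _) (le_max_left _ _)
  · exact le_max_of_le_left (le_L_left a b)
  · exact le_max_of_le_right (le_L_right b c)

lemma cd_triangle (a b c : Comb M) : cd a c ≤ cd a b + cd b c := by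
  have h1 := L_ultra hU a b c
  have h2 := le_L_right a b
  have h3 := le_L_left b c
  unfold cd
  rcases max_cases (L a b) (L b c) with ⟨h, _⟩ | ⟨h, _⟩ <;> rw [h] at h1 <;>
    [linarith; linarith]

/-- four point condition for `L` -/
lemma L_four (a b c d : Comb M) :
    L a b + L c d ≤ max (L a c + L b d) (L a d + L b c) := by
  have H1 : L a b ≤ max (L a c) (L b c) := by
    have := L_ultra hU a c b; rwa [L_comm c b] at this
  have H2 : L a b ≤ max (L a d) (L b d) := by
    have := L_ultra hU a d b; rwa [L_comm d b] at this
  have H3 : L c d ≤ max (L a c) (L a d) := by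
    have := L_ultra hU c a d; rwa [L_comm c a] at this
  have H4 : L c d ≤ max (L b c) (L b d) := by
    have := L_ultra hU c b d; rwa [L_comm c b] at this
  rcases le_max_iff.mp H1 with h1 | h1 <;>
  rcases le_max_iff.mp H2 with h2 | h2 <;>
  rcases le_max_iff.mp H3 with h3 | h3 <;>
  rcases le_max_iff.mp H4 with h4 | h4 <;>
  rcases le_total (L a b) (L c d) with h5 | h5 <;>
  first
    | (apply le_max_of_le_left; linarith)
    | (apply le_max_of_le_right; linarith)

lemma cd_four (a b c d : Comb M) :
    cd a b + cd c d ≤ max (cd a c + cd b d) (cd a d + cd b c) := by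
  have := L_four hU a b c d
  unfold cd
  rcases le_max_iff.mp this with h | h
  · exact le_max_of_le_left (by linarith)
  · exact le_max_of_le_right (by linarith)

end Ultra

noncomputable def mpt (a b : Comb M) : ℝ := max (dist a.pt b.pt / 2) (max a.ht b.ht)

lemma L_eq_two_mpt (a b : Comb M) : L a b = 2 * mpt a b := by
  unfold L mpt
  rw [mul_max_of_nonneg _ _ (by norm_num : (0:ℝ) ≤ 2),
      mul_max_of_nonneg _ _ (by norm_num : (0:ℝ) ≤ 2)]
  ring_nf

lemma cd_eq (a b : Comb M) : cd a b = 2 * mpt a b - a.ht - b.ht := by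
  unfold cd; rw [L_eq_two_mpt]

lemma ht_le_mpt_left (a b : Comb M) : a.ht ≤ mpt a b :=
  le_max_of_le_right (le_max_left _ _)
lemma ht_le_mpt_right (a b : Comb M) : b.ht ≤ mpt a b :=
  le_max_of_le_right (le_max_right _ _)
lemma dist_le_two_mpt (a b : Comb M) : dist a.pt b.pt ≤ 2 * mpt a b := by
  rw [← L_eq_two_mpt]; exact dist_le_L a b

lemma mpt_nonneg (a b : Comb M) : 0 ≤ mpt a b := le_trans a.ht0 (ht_le_mpt_left a b)

lemma mpt_eq_half_dist {a b : Comb M} (hs : a.ht < mpt a b) (ht : b.ht < mpt a b) :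
    2 * mpt a b = dist a.pt b.pt := by
  unfold mpt at *
  rcases max_cases (dist a.pt b.pt / 2) (max a.ht b.ht) with ⟨h, _⟩ | ⟨h, h2⟩
  · rw [h]; ring
  · exfalso
    rw [h] at hs ht
    rcases max_cases a.ht b.ht with ⟨h3, _⟩ | ⟨h3, _⟩ <;> rw [h3] at hs ht <;> linarith

omit [MetricSpace M] in
lemma mk_eq_mk {x y : M} {u v : ℝ} {cu : 0 ≤ u} {cv : 0 ≤ v} (h1 : x = y) (h2 : u = v) :
    (⟨x, u, cu⟩ : Comb M) = ⟨y, v, cv⟩ := by subst h1; subst h2; rfl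

lemma cd_mk_mk (x y : M) (u u' : ℝ) (c : 0 ≤ u) (c' : 0 ≤ u') :
    cd ⟨x, u, c⟩ ⟨y, u', c'⟩ = max (dist x y) (max (2*u) (2*u')) - u - u' := rfl

lemma cd_mk_left (x : M) (u : ℝ) (c : 0 ≤ u) (b : Comb M) :
    cd ⟨x, u, c⟩ b = max (dist x b.pt) (max (2*u) (2*b.ht)) - u - b.ht := rfl

lemma cd_same_pt (x : M) (h h' : ℝ) (h0 : 0 ≤ h) (h0' : 0 ≤ h') :
    cd ⟨x, h, h0⟩ ⟨x, h', h0'⟩ = |h - h'| := by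
  rw [cd_mk_mk, dist_self, max_eq_right (le_max_of_le_left (by linarith))]
  rcases le_total h h' with hle | hle
  · rw [max_eq_right (by linarith), abs_of_nonpos (by linarith)]; ring
  · rw [max_eq_left (by linarith), abs_of_nonneg (by linarith)]; ring

/-- the canonical geodesic from `a` to `b`, parametrized by `[0, cd a b]` -/
noncomputable def geo (a b : Comb M) (r : ℝ) : Comb M :=
  if r ≤ mpt a b - a.ht then ⟨a.pt, max 0 (a.ht + r), le_max_left _ _⟩
  else ⟨b.pt, max 0 (2 * mpt a b - a.ht - r), le_max_left _ _⟩

lemma geo_cd_of_le {a b : Comb M} {r r' : ℝ} (h0 : 0 ≤ r) (hrr : r ≤ r')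
    (hD : r' ≤ cd a b) : cd (geo a b r) (geo a b r') = r' - r := by
  have hs := ht_le_mpt_left a b
  have ht := ht_le_mpt_right a b
  have hcd := cd_eq a b
  have hb0 := b.ht0
  have ha0 := a.ht0
  have h0' : 0 ≤ r' := le_trans h0 hrr
  by_cases hr : r ≤ mpt a b - a.ht
  · by_cases hr' : r' ≤ mpt a b - a.ht
    · rw [geo, if_pos hr, geo, if_pos hr', cd_mk_mk, dist_self,
        max_eq_right (by linarith : (0:ℝ) ≤ a.ht + r),
        max_eq_right (by linarith : (0:ℝ) ≤ a.ht + r'),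
        max_eq_right (by linarith : 2*(a.ht + r) ≤ 2*(a.ht + r')),
        max_eq_right (by linarith : (0:ℝ) ≤ 2*(a.ht + r'))]
      ring
    · push_neg at hr'
      have hbt : b.ht < mpt a b := by linarith
      have hclamp : (0:ℝ) ≤ 2 * mpt a b - a.ht - r' := by linarith
      rw [geo, if_pos hr, geo, if_neg (not_le.mpr hr'), cd_mk_mk,
        max_eq_right (by linarith : (0:ℝ) ≤ a.ht + r), max_eq_right hclamp]
      have hL : max (dist a.pt b.pt) (max (2*(a.ht + r)) (2*(2 * mpt a b - a.ht - r')))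
          = 2 * mpt a b := by
        apply le_antisymm
        · exact max_le (dist_le_two_mpt a b) (max_le (by linarith) (by linarith))
        · by_cases hsm : a.ht < mpt a b
          · rw [mpt_eq_half_dist hsm hbt]; exact le_max_left _ _
          · push_neg at hsm
            have hr0 : r = 0 := le_antisymm (by linarith) h0
            refine le_max_of_le_right (le_max_of_le_left ?_)
            rw [hr0]; linarith
      rw [hL]; ring
  · push_neg at hr
    have hr' : ¬ r' ≤ mpt a b - a.ht := by push_neg; linarith
    have c1 : (0:ℝ) ≤ 2 * mpt a b - a.ht - r := by linarith
    have c2 : (0:ℝ) ≤ 2 * mpt a b - a.ht - r' := by linarith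
    rw [geo, if_neg (not_le.mpr hr), geo, if_neg hr', cd_mk_mk, dist_self,
      max_eq_right c1, max_eq_right c2,
      max_eq_left (by linarith : 2*(2 * mpt a b - a.ht - r') ≤ 2*(2 * mpt a b - a.ht - r)),
      max_eq_right (by linarith : (0:ℝ) ≤ 2*(2 * mpt a b - a.ht - r))]
    ring

lemma geo_cd {a b : Comb M} {r r' : ℝ} (h0 : 0 ≤ r) (hD : r ≤ cd a b)
    (h0' : 0 ≤ r') (hD' : r' ≤ cd a b) :
    cd (geo a b r) (geo a b r') = |r - r'| := by
  rcases le_total r r' with h | h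
  · rw [geo_cd_of_le h0 h hD', abs_of_nonpos (by linarith)]; ring
  · rw [cd_comm, geo_cd_of_le h0' h hD, abs_of_nonneg (by linarith)]

lemma geo_zero (a b : Comb M) : geo a b 0 = a := by
  rw [geo, if_pos (by linarith [ht_le_mpt_left a b])]
  exact mk_eq_mk rfl (by rw [add_zero, max_eq_right a.ht0])

lemma geo_last (a b : Comb M) : cd (geo a b (cd a b)) b = 0 := by
  have hs := ht_le_mpt_left a b
  have ht := ht_le_mpt_right a b
  have hcd := cd_eq a b
  have ha0 := a.ht0
  have hb0 := b.ht0
  by_cases h : cd a b ≤ mpt a b - a.ht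
  · have htm : b.ht = mpt a b := le_antisymm ht (by linarith)
    rw [geo, if_pos h, cd_mk_left, max_eq_right (show (0:ℝ) ≤ a.ht + cd a b by linarith [cd_nonneg a b])]
    have h1 : a.ht + cd a b = b.ht := by linarith
    rw [h1, max_self]
    rw [max_eq_right (by rw [htm]; exact dist_le_two_mpt a b)]
    ring
  · rw [geo, if_neg h, cd_mk_left, max_eq_right (show (0:ℝ) ≤ 2 * mpt a b - a.ht - cd a b by linarith)]
    have h1 : 2 * mpt a b - a.ht - cd a b = b.ht := by linarith
    rw [h1, max_self, dist_self, max_eq_right (by linarith)]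
    ring

/-- up-leg membership -/
lemma geo_up {a b : Comb M} {h : ℝ} (h1 : a.ht ≤ h) (h2 : h ≤ mpt a b) :
    geo a b (h - a.ht) = ⟨a.pt, h, le_trans a.ht0 h1⟩ := by
  rw [geo, if_pos (by linarith)]
  exact mk_eq_mk rfl (by rw [max_eq_right (by linarith [a.ht0])]; ring)

/-- down-leg membership (up to identification) -/
lemma geo_down {a b : Comb M} {h : ℝ} (h1 : b.ht ≤ h) (h2 : h ≤ mpt a b) :
    cd (geo a b (2 * mpt a b - a.ht - h)) ⟨b.pt, h, le_trans b.ht0 h1⟩ = 0 := by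
  have hs := ht_le_mpt_left a b
  have hb0 := b.ht0
  rcases lt_or_eq_of_le h2 with hlt | heq
  · rw [geo, if_neg (by push_neg; linarith), cd_mk_mk,
      max_eq_right (show (0:ℝ) ≤ 2 * mpt a b - a.ht - (2 * mpt a b - a.ht - h) by linarith)]
    have e1 : 2 * mpt a b - a.ht - (2 * mpt a b - a.ht - h) = h := by ring
    rw [e1, dist_self, max_self, max_eq_right (by linarith)]
    ring
  · rw [geo, if_pos (by linarith), cd_mk_mk,
      max_eq_right (show (0:ℝ) ≤ a.ht + (2 * mpt a b - a.ht - h) by linarith [a.ht0])]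
    have e1 : a.ht + (2 * mpt a b - a.ht - h) = h := by rw [heq]; ring
    rw [e1, max_self, max_eq_right (by rw [heq]; exact dist_le_two_mpt a b)]
    ring

lemma geo_range {a b : Comb M} {r : ℝ} (h0 : 0 ≤ r) (hD : r ≤ cd a b) :
    (∃ h hh, a.ht ≤ h ∧ h ≤ mpt a b ∧ geo a b r = ⟨a.pt, h, hh⟩) ∨
    (∃ h hh, b.ht ≤ h ∧ h ≤ mpt a b ∧ geo a b r = ⟨b.pt, h, hh⟩) := by
  have hs := ht_le_mpt_left a b
  have ht := ht_le_mpt_right a b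
  have hcd := cd_eq a b
  have ha0 := a.ht0
  have hb0 := b.ht0
  by_cases hr : r ≤ mpt a b - a.ht
  · left
    refine ⟨a.ht + r, by linarith, by linarith, by linarith, ?_⟩
    rw [geo, if_pos hr]
    exact mk_eq_mk rfl (max_eq_right (by linarith))
  · right
    push_neg at hr
    refine ⟨2 * mpt a b - a.ht - r, by linarith, by linarith, by linarith, ?_⟩
    rw [geo, if_neg (not_le.mpr hr)]
    exact mk_eq_mk rfl (max_eq_right (by linarith))

section Pow2

lemma two_mul_zpow_le {x y : ℝ} (hx : ∃ a : ℤ, x = 2^a) (hy : ∃ b : ℤ, y = 2^b)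
    (h : x < y) : 2 * x ≤ y := by
  obtain ⟨a, rfl⟩ := hx
  obtain ⟨b, rfl⟩ := hy
  have hab : a < b := (zpow_lt_zpow_iff_right₀ one_lt_two).mp h
  have : (2:ℝ) * 2^a = 2^(a+1) := by rw [zpow_add₀ (by norm_num : (2:ℝ) ≠ 0)]; ring
  rw [this]
  exact (zpow_le_zpow_iff_right₀ one_lt_two).mpr (by omega)

/-- key inequality for the retraction being 4-Lipschitz, ordered version -/
lemma retract_ineq_aux {d s t : ℝ} (hd0 : 0 ≤ d) (hs0 : 0 ≤ s)
    (hd : d = 0 ∨ ∃ n : ℤ, d = 2^n) (hs : s = 0 ∨ ∃ n : ℤ, 2*s = 2^n)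
    (ht : t = 0 ∨ ∃ n : ℤ, 2*t = 2^n) (hst : s ≤ t)
    (hρ : 0 < max d (max (2*s) (2*t)) - s - t) :
    d ≤ 4 * (max d (max (2*s) (2*t)) - s - t) := by
  have ht0 : 0 ≤ t := le_trans hs0 hst
  by_cases hdt : d ≤ 2*t
  · have hmax : max d (max (2*s) (2*t)) = 2*t := by
      rw [max_eq_right (by linarith : 2*s ≤ 2*t),
        max_eq_right (by linarith : d ≤ 2*t)]
    rw [hmax] at hρ ⊢
    have hst' : s < t := by linarith
    rcases hs with rfl | ⟨a, ha⟩
    · linarith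
    · rcases ht with h0 | ⟨b, hb⟩
      · linarith
      · have : 2 * (2*s) ≤ 2*t := two_mul_zpow_le ⟨a, ha⟩ ⟨b, hb⟩ (by linarith)
        linarith
  · push_neg at hdt
    have hmax : max d (max (2*s) (2*t)) = d := by
      rw [max_eq_left (max_le (by linarith) (by linarith))]
    rw [hmax] at hρ ⊢
    have hd' : ∃ n : ℤ, d = 2^n := by
      rcases hd with rfl | h
      · exfalso; linarith
      · exact h
    have h4s : 4 * s ≤ d := by
      rcases hs with rfl | ⟨a, ha⟩
      · linarith
      · have := two_mul_zpow_le ⟨a, ha⟩ hd' (by linarith)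
        linarith
    have h4t : 4 * t ≤ d := by
      rcases ht with rfl | ⟨b, hb⟩
      · linarith
      · have := two_mul_zpow_le ⟨b, hb⟩ hd' (by linarith)
        linarith
    linarith

lemma retract_ineq {d s t : ℝ} (hd0 : 0 ≤ d) (hs0 : 0 ≤ s) (ht0 : 0 ≤ t)
    (hd : d = 0 ∨ ∃ n : ℤ, d = 2^n) (hs : s = 0 ∨ ∃ n : ℤ, 2*s = 2^n)
    (ht : t = 0 ∨ ∃ n : ℤ, 2*t = 2^n)
    (hρ : 0 < max d (max (2*s) (2*t)) - s - t) :
    d ≤ 4 * (max d (max (2*s) (2*t)) - s - t) := by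
  rcases le_total s t with h | h
  · exact retract_ineq_aux hd0 hs0 hd hs ht h hρ
  · rw [max_comm (2*s) (2*t)] at *
    have := retract_ineq_aux hd0 ht0 hd ht hs h (by linarith)
    linarith

end Pow2

omit [MetricSpace M] in
lemma exists_between_nonpow {α β : ℝ} (h0 : 0 ≤ α) (hab : α < β) :
    ∃ h, α < h ∧ h < β ∧ ¬ ∃ n : ℤ, 2*h = (2:ℝ)^n := by
  by_cases hp : ∃ n : ℤ, 2*((α+β)/2) = (2:ℝ)^n
  · refine ⟨(α+3*β)/4, by linarith, by linarith, ?_⟩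
    rintro ⟨m, hm⟩
    obtain ⟨n, hn⟩ := hp
    have h1 : (2:ℝ)^n < 2^m := by rw [← hm, ← hn]; linarith
    have h2m : 2*(2:ℝ)^n ≤ 2^m := two_mul_zpow_le ⟨n, rfl⟩ ⟨m, rfl⟩ h1
    rw [← hn, ← hm] at h2m
    linarith
  · exact ⟨(α+β)/2, by linarith, by linarith, hp⟩

lemma closed_core
    (hU : ∀ x y z : M, dist x z ≤ max (dist x y) (dist y z))
    (h2 : ∀ x y : M, x ≠ y → ∃ n : ℤ, dist x y = (2:ℝ)^n)
    {p : Comb M} (hpt : 0 < p.ht)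
    (hns : ¬ ∃ y z : M, dist p.pt y ≤ 2*p.ht ∧ dist y z = 2*p.ht) :
    ∃ ε, 0 < ε ∧ ∀ q : Comb M,
      (q.ht = 0 ∨ (0 < q.ht ∧ ∃ y z : M, dist q.pt y ≤ 2*q.ht ∧ dist y z = 2*q.ht)) →
      ε ≤ cd p q := by
  obtain ⟨ε, hε0, hεt, Hpow⟩ : ∃ ε, 0 < ε ∧ ε ≤ p.ht/2 ∧
      ∀ m : ℤ, |(2:ℝ)^m - 2*p.ht| < 2*ε → (2:ℝ)^m = 2*p.ht := by
    by_cases hA : ∃ n : ℤ, 2*p.ht = (2:ℝ)^n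
    · obtain ⟨n, hn⟩ := hA
      refine ⟨p.ht/2, by linarith, le_refl _, ?_⟩
      intro m hm
      have ht2 : (2:ℝ)^n = 2*p.ht := hn.symm
      have habs := abs_lt.mp hm
      have hmn : m = n := by
        by_contra hne
        rcases lt_or_gt_of_ne hne with h | h
        · have hle : (2:ℝ)^m ≤ 2^(n-1) := (zpow_le_zpow_iff_right₀ one_lt_two).mpr (by omega)
          have he : (2:ℝ)^(n-1) = p.ht := by
            rw [zpow_sub_one₀ (two_ne_zero), ht2]; ring
          rw [he] at hle
          linarith
        · have hge : (2:ℝ)^(n+1) ≤ 2^m := (zpow_le_zpow_iff_right₀ one_lt_two).mpr (by omega)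
          have he : (2:ℝ)^(n+1) = 4*p.ht := by
            rw [zpow_add_one₀ (two_ne_zero), ht2]; ring
          rw [he] at hge
          linarith
      rw [hmn, ht2]
    · have hx : 0 < 2*p.ht := by linarith
      set n := ⌊Real.logb 2 (2*p.ht)⌋ with hndef
      have hA1 : (2:ℝ)^n ≤ 2*p.ht := by
        have h1 : ((2:ℝ)^((n:ℤ):ℝ)) ≤ 2^(Real.logb 2 (2*p.ht)) :=
          (Real.rpow_le_rpow_left_iff (by norm_num)).mpr (Int.floor_le _)
        rw [Real.rpow_logb (by norm_num) (by norm_num) hx] at h1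
        rw [← Real.rpow_intCast 2 n]
        exact h1
      have hA1' : (2:ℝ)^n < 2*p.ht := lt_of_le_of_ne hA1 (fun h => hA ⟨n, h.symm⟩)
      have hB1 : 2*p.ht < (2:ℝ)^(n+1) := by
        have h1 : (2:ℝ)^(Real.logb 2 (2*p.ht)) < 2^(((n+1:ℤ)):ℝ) := by
          apply (Real.rpow_lt_rpow_left_iff (by norm_num)).mpr
          push_cast
          exact Int.lt_floor_add_one _
        rw [Real.rpow_logb (by norm_num) (by norm_num) hx] at h1
        rw [← Real.rpow_intCast 2 (n+1)]
        exact h1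
      refine ⟨min (p.ht/2) (min ((2*p.ht - 2^n)/2) (((2:ℝ)^(n+1) - 2*p.ht)/2)),
        lt_min (by linarith) (lt_min (by linarith) (by linarith)),
        min_le_left _ _, ?_⟩
      intro m hm
      exfalso
      have habs := abs_lt.mp hm
      have he1 : min (p.ht/2) (min ((2*p.ht - 2^n)/2) (((2:ℝ)^(n+1) - 2*p.ht)/2)) ≤
          (2*p.ht - 2^n)/2 := le_trans (min_le_right _ _) (min_le_left _ _)
      have he2 : min (p.ht/2) (min ((2*p.ht - 2^n)/2) (((2:ℝ)^(n+1) - 2*p.ht)/2)) ≤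
          ((2:ℝ)^(n+1) - 2*p.ht)/2 := le_trans (min_le_right _ _) (min_le_right _ _)
      have hgt : (2:ℝ)^n < 2^m := by linarith
      have hlt : (2:ℝ)^m < 2^(n+1) := by linarith
      have k1 := (zpow_lt_zpow_iff_right₀ (one_lt_two (α := ℝ))).mp hgt
      have k2 := (zpow_lt_zpow_iff_right₀ (one_lt_two (α := ℝ))).mp hlt
      omega
  refine ⟨ε, hε0, ?_⟩
  intro q hq
  by_contra hlt
  push_neg at hlt
  have habs : |p.ht - q.ht| ≤ cd p q := abs_sub_ht_le_cd p q
  rcases hq with hq0 | ⟨hqpos, y, z, hy, hz⟩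
  · rw [hq0, sub_zero, abs_of_nonneg p.ht0] at habs
    linarith
  · have hyz : y ≠ z := fun he => by rw [he, dist_self] at hz; linarith
    obtain ⟨m, hm⟩ := h2 y z hyz
    have h2u : (2:ℝ)^m = 2*q.ht := hm.symm.trans hz
    have hut : q.ht = p.ht := by
      have hmm : |(2:ℝ)^m - 2*p.ht| < 2*ε := by
        rw [h2u]
        have : |2*q.ht - 2*p.ht| = 2*|q.ht - p.ht| := by
          rw [show 2*q.ht - 2*p.ht = 2*(q.ht - p.ht) by ring, abs_mul, abs_two]
        rw [this, abs_sub_comm]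
        have := abs_sub_ht_le_cd p q
        linarith
      have := Hpow m hmm
      rw [h2u] at this; linarith
    have hdle : dist p.pt q.pt ≤ 2*p.ht := by
      by_contra hgt
      push_neg at hgt
      have hne : p.pt ≠ q.pt := by
        intro he; rw [he, dist_self] at hgt; linarith
      obtain ⟨k, hk⟩ := h2 p.pt q.pt hne
      have hcl : dist p.pt q.pt - p.ht - q.ht ≤ cd p q := by
        unfold cd; linarith [dist_le_L p q]
      have hkk : |(2:ℝ)^k - 2*p.ht| < 2*ε := by
        rw [← hk, abs_of_pos (by linarith)]
        linarith [hut]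
      have := Hpow k hkk
      rw [← hk] at this
      linarith
    apply hns
    refine ⟨y, z, ?_, by rw [hz, hut]⟩
    calc dist p.pt y ≤ max (dist p.pt q.pt) (dist q.pt y) := hU _ _ _
      _ ≤ 2*p.ht := max_le hdle (by rw [← hut]; exact hy)

noncomputable def pseudo (M : Type u) [MetricSpace M]
    (hU : ∀ x y z : M, dist x z ≤ max (dist x y) (dist y z)) :
    PseudoMetricSpace (Comb M) where
  dist := cd
  dist_self := cd_self
  dist_comm := cd_comm
  dist_triangle := fun a b c => cd_triangle hU a b c

end Comb
open Comb in
/-- Let `(M,d)` be a `2ⁿ`-valued ultrametric space. Then there is an ℝ-tree `(T,ρ)` such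
that: (i) `M` embeds isometrically into `T`; (ii) identifying `M` with its image,
`Br(T) ∪ M` is closed in `T` and contains no segment `[x,y]` with `x ≠ y`; (iii) `M` is a
`4`-Lipschitz retract of `Br(T) ∪ M`. Moreover if `M` is separable, `T` is separable. -/
theorem ultrametric_embeds_in_rtree {M : Type u} [MetricSpace M]
    (hU : ∀ x y z : M, dist x z ≤ max (dist x y) (dist y z))
    (h2 : ∀ x y : M, x ≠ y → ∃ n : ℤ, dist x y = (2 : ℝ) ^ n) :
    ∃ (T : Type u) (instT : MetricSpace T), letI := instT;
      ∃ e : M → T,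
        IsRTree T ∧
        Isometry e ∧
        IsClosed (branchingPoints T ∪ Set.range e) ∧
        (∀ x y : T, x ≠ y → ¬ rTreeSeg x y ⊆ branchingPoints T ∪ Set.range e) ∧
        (∃ r : (branchingPoints T ∪ Set.range e : Set T) → T,
          LipschitzWith 4 r ∧
          Set.range r = Set.range e ∧
          ∀ a : (branchingPoints T ∪ Set.range e : Set T), (a : T) ∈ Set.range e → r a = a) ∧
        (TopologicalSpace.SeparableSpace M → TopologicalSpace.SeparableSpace T) := by
  classical
  letI instC : PseudoMetricSpace (Comb M) := Comb.pseudo M hU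
  refine ⟨SeparationQuotient (Comb M), inferInstance, ?_⟩
  set T := SeparationQuotient (Comb M) with hT
  let mk : Comb M → T := SeparationQuotient.mk
  -- basic plumbing
  have hdq : ∀ p q : Comb M, dist (mk p) (mk q) = cd p q := fun p q =>
    (SeparationQuotient.dist_mk p q).trans rfl
  have hsurj : Function.Surjective mk := SeparationQuotient.surjective_mk
  have hmkeq : ∀ p q : Comb M, cd p q = 0 → mk p = mk q := fun p q h =>
    SeparationQuotient.mk_eq_mk.mpr (Metric.inseparable_iff.mpr
      ((rfl : dist p q = cd p q).trans h))
  have hmkeq' : ∀ p q : Comb M, mk p = mk q → cd p q = 0 := fun p q h => by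
    rw [← hdq, h, dist_self]
  -- four point condition on T
  have hfour : ∀ w z u v : T, dist w z + dist u v ≤
      max (dist w u + dist z v) (dist w v + dist z u) := by
    intro w z u v
    obtain ⟨a, rfl⟩ := hsurj w; obtain ⟨b, rfl⟩ := hsurj z
    obtain ⟨c, rfl⟩ := hsurj u; obtain ⟨d, rfl⟩ := hsurj v
    simp only [hdq]
    exact cd_four hU a b c d
  -- canonical geodesics
  have hcanon : ∀ a b : Comb M,
      Isometry (fun r : Set.Icc (0:ℝ) (dist (mk a) (mk b)) => mk (geo a b r.1)) ∧
      mk (geo a b ((⟨0, le_refl 0, dist_nonneg⟩ :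
        Set.Icc (0:ℝ) (dist (mk a) (mk b))) : ℝ)) = mk a ∧
      mk (geo a b ((⟨dist (mk a) (mk b), dist_nonneg, le_refl _⟩ :
        Set.Icc (0:ℝ) (dist (mk a) (mk b))) : ℝ)) = mk b := by
    intro a b
    refine ⟨?_, ?_, ?_⟩
    · apply Isometry.of_dist_eq
      intro r r'
      rw [hdq, geo_cd r.2.1 (r.2.2.trans (hdq a b).le) r'.2.1 (r'.2.2.trans (hdq a b).le),
        Subtype.dist_eq, Real.dist_eq]
    · show mk (geo a b 0) = mk a
      rw [geo_zero]
    · show mk (geo a b (dist (mk a) (mk b))) = mk b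
      rw [hdq]
      exact hmkeq _ _ (geo_last a b)
  -- betweenness for isometric paths
  have hbet : ∀ (a b : Comb M) (χ : Set.Icc (0:ℝ) (dist (mk a) (mk b)) → T),
      Isometry χ → χ ⟨0, le_refl 0, dist_nonneg⟩ = mk a →
      χ ⟨dist (mk a) (mk b), dist_nonneg, le_refl _⟩ = mk b →
      ∀ r, dist (mk a) (χ r) = r.1 ∧
        dist (χ r) (mk b) = dist (mk a) (mk b) - r.1 := by
    intro a b χ hiso h0 hD r
    constructor
    · calc dist (mk a) (χ r) = dist (χ ⟨0, le_refl 0, dist_nonneg⟩) (χ r) := by rw [h0]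
        _ = dist (⟨0, le_refl 0, dist_nonneg⟩ : Set.Icc (0:ℝ) (dist (mk a) (mk b))) r :=
            hiso.dist_eq _ _
        _ = r.1 := by rw [Subtype.dist_eq, Real.dist_eq]; simp [abs_of_nonneg r.2.1]
    · calc dist (χ r) (mk b)
          = dist (χ r) (χ ⟨dist (mk a) (mk b), dist_nonneg, le_refl _⟩) := by rw [hD]
        _ = dist r (⟨dist (mk a) (mk b), dist_nonneg, le_refl _⟩ :
            Set.Icc (0:ℝ) (dist (mk a) (mk b))) := hiso.dist_eq _ _
        _ = dist (mk a) (mk b) - r.1 := by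
            rw [Subtype.dist_eq, Real.dist_eq, abs_of_nonpos (by linarith [r.2.2])]
            simp
  -- uniqueness of isometric paths
  have huniq : ∀ (a b : Comb M) (χ : Set.Icc (0:ℝ) (dist (mk a) (mk b)) → T),
      Isometry χ → χ ⟨0, le_refl 0, dist_nonneg⟩ = mk a →
      χ ⟨dist (mk a) (mk b), dist_nonneg, le_refl _⟩ = mk b →
      χ = fun r => mk (geo a b r.1) := by
    intro a b χ hiso h0 hD
    obtain ⟨hiso', h0', hD'⟩ := hcanon a b
    funext r
    have hb1 := hbet a b χ hiso h0 hD r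
    have hb2 := hbet a b _ hiso' h0' hD' r
    have h4 := hfour (mk a) (mk b) (χ r) (mk (geo a b r.1))
    have hb22 : dist (mk b) (mk (geo a b r.1)) = dist (mk a) (mk b) - r.1 := by
      rw [dist_comm]; exact hb2.2
    have hb12 : dist (mk b) (χ r) = dist (mk a) (mk b) - r.1 := by
      rw [dist_comm]; exact hb1.2
    rw [hb1.1, hb2.1, hb22, hb12] at h4
    have hle : dist (χ r) (mk (geo a b r.1)) ≤ 0 := by
      rw [max_self] at h4
      linarith
    exact eq_of_dist_eq_zero (le_antisymm hle dist_nonneg)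
  have hRT : IsRTree T := by
    intro x y
    obtain ⟨a, rfl⟩ := hsurj x; obtain ⟨b, rfl⟩ := hsurj y
    obtain ⟨hiso, h0, hD⟩ := hcanon a b
    exact ⟨fun r => mk (geo a b r.1), ⟨hiso, h0, hD⟩, fun χ hχ => huniq a b χ hχ.1 hχ.2.1 hχ.2.2⟩
  -- segment membership
  have hseg_mem : ∀ (a b : Comb M) (r : ℝ), 0 ≤ r → r ≤ cd a b →
      mk (geo a b r) ∈ rTreeSeg (mk a) (mk b) := by
    intro a b r h0 hr
    obtain ⟨hiso, hz, hD⟩ := hcanon a b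
    exact ⟨fun r => mk (geo a b r.1), hiso, hz, hD,
      ⟨⟨r, h0, by rw [hdq]; exact hr⟩, rfl⟩⟩
  have hseg_sub : ∀ (a b : Comb M) (v : T), v ∈ rTreeSeg (mk a) (mk b) →
      ∃ r, 0 ≤ r ∧ r ≤ cd a b ∧ mk (geo a b r) = v := by
    rintro a b v ⟨χ, hiso, h0, hD, ⟨u, hu⟩⟩
    rw [huniq a b χ hiso h0 hD] at hu
    exact ⟨u.1, u.2.1, by rw [← hdq]; exact u.2.2, hu⟩
  -- the embedding
  let e : M → T := fun x => mk ⟨x, 0, le_refl 0⟩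
  have hcd00 : ∀ x y : M, cd (⟨x, 0, le_refl 0⟩ : Comb M) ⟨y, 0, le_refl 0⟩ = dist x y := by
    intro x y
    rw [cd_mk_mk]
    simp [max_eq_left dist_nonneg]
  have he : Isometry e := Isometry.of_dist_eq fun x y => by
    show dist (mk _) (mk _) = dist x y
    rw [hdq, hcd00]
  -- the candidate set for Br(T) ∪ M
  let P : Comb M → Prop := fun p => p.ht = 0 ∨
    (0 < p.ht ∧ ∃ y z : M, dist p.pt y ≤ 2*p.ht ∧ dist y z = 2*p.ht)
  let C : Set T := {v | ∃ p, mk p = v ∧ P p}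
  -- the endpoint belongs to every segment ending at it
  have hpend : ∀ a b : Comb M, mk b ∈ rTreeSeg (mk a) (mk b) := by
    intro a b
    have := hseg_mem a b (cd a b) (cd_nonneg a b) le_rfl
    rwa [hmkeq _ _ (geo_last a b)] at this
  have hBC : branchingPoints T ∪ Set.range e = C := by
    apply Set.Subset.antisymm
    · rintro v (hv | ⟨x0, rfl⟩)
      · -- branching points are in C
        obtain ⟨p, rfl⟩ := hsurj v
        obtain ⟨x₁, x₂, x₃, hn1, hn2, hn3, h12, h13, h23⟩ := hv
        obtain ⟨a₁, rfl⟩ := hsurj x₁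
        obtain ⟨a₂, rfl⟩ := hsurj x₂
        obtain ⟨a₃, rfl⟩ := hsurj x₃
        -- two segments cannot both ascend above p
        have hclaim : ∀ ai aj : Comb M,
            rTreeSeg (mk ai) (mk p) ∩ rTreeSeg (mk aj) (mk p) = {mk p} →
            p.ht < mpt ai p → p.ht < mpt aj p → False := by
          intro ai aj hint hi hj
          have hph : p.ht ≤ min (mpt ai p) (mpt aj p) := le_min hi.le hj.le
          have h0h : 0 ≤ min (mpt ai p) (mpt aj p) := le_trans p.ht0 hph
          have hwmem : ∀ ak : Comb M, min (mpt ai p) (mpt aj p) ≤ mpt ak p →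
              mk ⟨p.pt, min (mpt ai p) (mpt aj p), h0h⟩ ∈ rTreeSeg (mk ak) (mk p) := by
            intro ak hkm
            have hgd := geo_down (a := ak) (b := p)
              (h := min (mpt ai p) (mpt aj p)) hph hkm
            have heqw := hmkeq _ _ hgd
            have hr0 : 0 ≤ 2 * mpt ak p - ak.ht - min (mpt ai p) (mpt aj p) := by
              linarith [ht_le_mpt_left ak p]
            have hrD : 2 * mpt ak p - ak.ht - min (mpt ai p) (mpt aj p) ≤ cd ak p := by
              rw [cd_eq]; linarith
            have := hseg_mem ak p _ hr0 hrD
            rwa [heqw] at this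
          have hmem := Set.mem_inter (hwmem ai (min_le_left _ _))
            (hwmem aj (min_le_right _ _))
          rw [hint] at hmem
          have := cd_eq_zero_iff.mp (hmkeq' _ _ hmem)
          have : min (mpt ai p) (mpt aj p) = p.ht := this.1
          have := lt_min hi hj
          linarith
        -- two purely ascending segments force a split at p
        have hasc : ∀ ai aj : Comb M, mk ai ≠ mk p → mk aj ≠ mk p →
            rTreeSeg (mk ai) (mk p) ∩ rTreeSeg (mk aj) (mk p) = {mk p} →
            mpt ai p ≤ p.ht → mpt aj p ≤ p.ht → (mk p : T) ∈ C := by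
          intro ai aj hni hnj hint hi hj
          have hmi : mpt ai p = p.ht := le_antisymm hi (ht_le_mpt_right ai p)
          have hmj : mpt aj p = p.ht := le_antisymm hj (ht_le_mpt_right aj p)
          have hcdi : (0:ℝ) < cd ai p := by rw [← hdq]; exact dist_pos.mpr hni
          have hcdj : (0:ℝ) < cd aj p := by rw [← hdq]; exact dist_pos.mpr hnj
          have hui : ai.ht < p.ht := by
            have := cd_eq ai p; rw [hmi] at this; linarith
          have huj : aj.ht < p.ht := by
            have := cd_eq aj p; rw [hmj] at this; linarith
          have hdi : dist ai.pt p.pt ≤ 2 * p.ht := by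
            have := dist_le_two_mpt ai p; rw [hmi] at this; exact this
          have hdj : dist aj.pt p.pt ≤ 2 * p.ht := by
            have := dist_le_two_mpt aj p; rw [hmj] at this; exact this
          have hlow : ¬ dist ai.pt aj.pt < 2 * p.ht := by
            intro hlt
            set h := max (max ai.ht aj.ht) (dist ai.pt aj.pt / 2) with hhdef
            have hhp : h < p.ht := max_lt (max_lt hui huj) (by linarith)
            have h0h : 0 ≤ h := le_trans ai.ht0 (le_max_of_le_left (le_max_left _ _))
            have hwi : mk ⟨ai.pt, h, h0h⟩ ∈ rTreeSeg (mk ai) (mk p) := by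
              have hgu := geo_up (a := ai) (b := p) (h := h)
                (le_max_of_le_left (le_max_left _ _)) (by rw [hmi]; exact hhp.le)
              have hx : ai.ht ≤ h := le_max_of_le_left (le_max_left _ _)
              have := hseg_mem ai p (h - ai.ht) (by linarith)
                (by rw [cd_eq, hmi]; linarith)
              rwa [hgu] at this
            have hwj : mk ⟨ai.pt, h, h0h⟩ ∈ rTreeSeg (mk aj) (mk p) := by
              have hgu := geo_up (a := aj) (b := p) (h := h)
                (le_max_of_le_left (le_max_right _ _)) (by rw [hmj]; exact hhp.le)
              have hx : aj.ht ≤ h := le_max_of_le_left (le_max_right _ _)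
              have hmem := hseg_mem aj p (h - aj.ht) (by linarith)
                (by rw [cd_eq, hmj]; linarith)
              rw [hgu] at hmem
              have heqm : mk ⟨aj.pt, h, le_trans aj.ht0
                  (le_max_of_le_left (le_max_right _ _))⟩ = mk ⟨ai.pt, h, h0h⟩ := by
                apply hmkeq
                rw [cd_eq_zero_iff]
                refine ⟨rfl, ?_⟩
                show dist aj.pt ai.pt ≤ 2 * h
                rw [dist_comm]
                have : dist ai.pt aj.pt / 2 ≤ h := le_max_right _ _
                linarith
              rwa [heqm] at hmem
            have hmem := Set.mem_inter hwi hwj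
            rw [hint] at hmem
            have hz := cd_eq_zero_iff.mp (hmkeq' _ _ hmem)
            have : h = p.ht := hz.1
            linarith
          have hup : dist ai.pt aj.pt ≤ 2 * p.ht := by
            refine le_trans (hU ai.pt p.pt aj.pt) (max_le hdi ?_)
            rw [dist_comm]; exact hdj
          have hde : dist ai.pt aj.pt = 2 * p.ht := le_antisymm hup (not_lt.mp hlow)
          refine ⟨p, rfl, Or.inr ⟨by linarith [ai.ht0], ai.pt, aj.pt, ?_, hde⟩⟩
          rw [dist_comm]; exact hdi
        by_cases c1 : mpt a₁ p ≤ p.ht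
        · by_cases c2 : mpt a₂ p ≤ p.ht
          · exact hasc a₁ a₂ hn1 hn2 h12 c1 c2
          · by_cases c3 : mpt a₃ p ≤ p.ht
            · exact hasc a₁ a₃ hn1 hn3 h13 c1 c3
            · exact absurd (hclaim a₂ a₃ h23 (not_le.mp c2) (not_le.mp c3)) not_false
        · by_cases c2 : mpt a₂ p ≤ p.ht
          · by_cases c3 : mpt a₃ p ≤ p.ht
            · exact hasc a₂ a₃ hn2 hn3 h23 c2 c3
            · exact absurd (hclaim a₁ a₃ h13 (not_le.mp c1) (not_le.mp c3)) not_false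
          · exact absurd (hclaim a₁ a₂ h12 (not_le.mp c1) (not_le.mp c2)) not_false
      · exact ⟨⟨x0, 0, le_refl 0⟩, rfl, Or.inl rfl⟩
    · -- C is contained in Br(T) ∪ M
      rintro v ⟨p, rfl, hP⟩
      rcases hP with h0 | ⟨hpos, y, z, hy, hz⟩
      · right
        refine ⟨p.pt, ?_⟩
        show mk _ = mk p
        apply hmkeq
        rw [cd_eq_zero_iff]
        exact ⟨h0.symm, by rw [dist_self]; norm_num⟩
      · left
        have hdz : dist p.pt z ≤ 2*p.ht := le_trans (hU p.pt y z) (max_le hy (le_of_eq hz))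
        have hvtop : ∀ (c : M), dist c p.pt ≤ 2*p.ht →
            mk ⟨c, p.ht, p.ht0⟩ = mk p := by
          intro c hc
          apply hmkeq
          rw [cd_eq_zero_iff]
          exact ⟨rfl, hc⟩
        -- characterization of ascending segments
        have hchar12 : ∀ (w : T) (c : M), dist c p.pt ≤ 2*p.ht →
            w ∈ rTreeSeg (mk ⟨c, 0, le_refl 0⟩) (mk p) →
            w = mk p ∨ ∃ (h : ℝ) (h0 : 0 ≤ h), h ≤ p.ht ∧ w = mk ⟨c, h, h0⟩ := by
          intro w c hcp hw
          have hmc : mpt ⟨c, 0, le_refl 0⟩ p = p.ht := by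
            apply le_antisymm
            · exact max_le (by show dist c p.pt / 2 ≤ p.ht; linarith)
                (max_le (by show (0:ℝ) ≤ p.ht; exact p.ht0) le_rfl)
            · exact ht_le_mpt_right _ _
          obtain ⟨r, hr0, hrD, hrw⟩ := hseg_sub _ _ w hw
          rcases geo_range hr0 hrD with ⟨h, hh, hh1, hh2, hge⟩ | ⟨h, hh, hh1, hh2, hge⟩
          · right
            exact ⟨h, hh, by rw [hmc] at hh2; exact hh2, by rw [← hrw, hge]⟩
          · left
            have hht : h = p.ht := le_antisymm (by rw [hmc] at hh2; exact hh2) hh1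
            rw [← hrw, hge]
            apply hmkeq
            rw [cd_eq_zero_iff]
            refine ⟨hht, ?_⟩
            show dist p.pt p.pt ≤ 2*h
            rw [dist_self]; linarith
        have hchar3 : ∀ w : T, w ∈ rTreeSeg (mk ⟨p.pt, 2*p.ht, by linarith⟩) (mk p) →
            ∃ (h : ℝ) (h0 : 0 ≤ h), p.ht ≤ h ∧ w = mk ⟨p.pt, h, h0⟩ := by
          intro w hw
          have hm3 : mpt ⟨p.pt, 2*p.ht, by linarith⟩ p = 2*p.ht := by
            apply le_antisymm
            · refine max_le ?_ (max_le le_rfl (by show p.ht ≤ 2*p.ht; linarith))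
              show dist p.pt p.pt / 2 ≤ 2*p.ht
              rw [dist_self]; linarith
            · exact ht_le_mpt_left ⟨p.pt, 2*p.ht, by linarith⟩ p
          obtain ⟨r, hr0, hrD, hrw⟩ := hseg_sub _ _ w hw
          rcases geo_range hr0 hrD with ⟨h, hh, hh1, hh2, hge⟩ | ⟨h, hh, hh1, hh2, hge⟩
          · refine ⟨h, hh, ?_, by rw [← hrw, hge]⟩
            have : 2*p.ht ≤ h := hh1
            linarith
          · exact ⟨h, hh, hh1, by rw [← hrw, hge]⟩
        have hne0 : ∀ c : M, mk (⟨c, 0, le_refl 0⟩ : Comb M) ≠ mk p := by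
          intro c hcon
          have := (cd_eq_zero_iff.mp (hmkeq' _ _ hcon)).1
          simp only at this
          linarith [this]
        have heq_ht : ∀ (c c' : M) (h h' : ℝ) (hh : 0 ≤ h) (hh' : 0 ≤ h'),
            mk (⟨c, h, hh⟩ : Comb M) = mk ⟨c', h', hh'⟩ →
            h = h' ∧ dist c c' ≤ 2*h := fun c c' h h' hh hh' hcon =>
          cd_eq_zero_iff.mp (hmkeq' _ _ hcon)
        refine ⟨mk ⟨y, 0, le_refl 0⟩, mk ⟨z, 0, le_refl 0⟩,
          mk ⟨p.pt, 2*p.ht, by linarith⟩, hne0 y, hne0 z, ?_, ?_, ?_, ?_⟩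
        · -- x₃ ≠ v
          intro hcon
          have := (cd_eq_zero_iff.mp (hmkeq' _ _ hcon)).1
          simp only at this
          linarith
        · -- seg₁ ∩ seg₂ = {v}
          apply Set.Subset.antisymm
          · rintro w ⟨hw1, hw2⟩
            rcases hchar12 w y (by rw [dist_comm]; exact hy) hw1 with heq | ⟨h, h0, hht, rfl⟩
            · exact heq
            · rcases hchar12 _ z (by rw [dist_comm]; exact hdz) hw2 with heq | ⟨h', h0', hht', heq⟩
              · exact heq
              · obtain ⟨hhh, hdyz⟩ := heq_ht y z h h' h0 h0' heq
                have hht2 : h = p.ht := by rw [hz] at hdyz; linarith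
                show mk _ = mk p
                rw [show (⟨y, h, h0⟩ : Comb M) = ⟨y, p.ht, p.ht0⟩ from mk_eq_mk rfl hht2]
                exact hvtop y (by rw [dist_comm]; exact hy)
          · intro w hw
            rw [Set.mem_singleton_iff] at hw
            subst hw
            exact Set.mem_inter (hpend _ p) (hpend _ p)
        · -- seg₁ ∩ seg₃ = {v}
          apply Set.Subset.antisymm
          · rintro w ⟨hw1, hw3⟩
            obtain ⟨h', h0', hht', rfl⟩ := hchar3 w hw3
            rcases hchar12 _ y (by rw [dist_comm]; exact hy) hw1 with heq | ⟨h, h0, hht, heq⟩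
            · exact heq
            · obtain ⟨hhh, _⟩ := heq_ht p.pt y h' h h0' h0 heq
              have hht2 : h' = p.ht := by linarith
              show mk _ = mk p
              rw [show (⟨p.pt, h', h0'⟩ : Comb M) = ⟨p.pt, p.ht, p.ht0⟩ from
                mk_eq_mk rfl hht2]
          · intro w hw
            rw [Set.mem_singleton_iff] at hw
            subst hw
            exact Set.mem_inter (hpend _ p) (hpend _ p)
        · -- seg₂ ∩ seg₃ = {v}
          apply Set.Subset.antisymm
          · rintro w ⟨hw2, hw3⟩
            obtain ⟨h', h0', hht', rfl⟩ := hchar3 w hw3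
            rcases hchar12 _ z (by rw [dist_comm]; exact hdz) hw2 with heq | ⟨h, h0, hht, heq⟩
            · exact heq
            · obtain ⟨hhh, _⟩ := heq_ht p.pt z h' h h0' h0 heq
              have hht2 : h' = p.ht := by linarith
              show mk _ = mk p
              rw [show (⟨p.pt, h', h0'⟩ : Comb M) = ⟨p.pt, p.ht, p.ht0⟩ from
                mk_eq_mk rfl hht2]
          · intro w hw
            rw [Set.mem_singleton_iff] at hw
            subst hw
            exact Set.mem_inter (hpend _ p) (hpend _ p)
  have hClosed : IsClosed C := by
    rw [← isOpen_compl_iff, Metric.isOpen_iff]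
    intro v hv
    obtain ⟨p, rfl⟩ := hsurj v
    have hnP : ¬ P p := fun hp => hv ⟨p, rfl, hp⟩
    have hpt : 0 < p.ht := by
      rcases lt_or_eq_of_le p.ht0 with h | h
      · exact h
      · exact absurd (Or.inl h.symm) hnP
    have hns : ¬ ∃ y z : M, dist p.pt y ≤ 2*p.ht ∧ dist y z = 2*p.ht := by
      rintro ⟨y, z, hy, hz⟩
      exact hnP (Or.inr ⟨hpt, y, z, hy, hz⟩)
    obtain ⟨ε, hε0, hεcd⟩ := closed_core hU h2 hpt hns
    refine ⟨ε, hε0, ?_⟩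
    rintro w hw ⟨q, rfl, hPq⟩
    rw [Metric.mem_ball, dist_comm, hdq] at hw
    exact absurd hw (not_lt.mpr (hεcd q hPq))
  have hNoSeg : ∀ x y : T, x ≠ y → ¬ rTreeSeg x y ⊆ branchingPoints T ∪ Set.range e := by
    intro x y hxy hsub
    obtain ⟨a, rfl⟩ := hsurj x
    obtain ⟨b, rfl⟩ := hsurj y
    have hD : 0 < cd a b := by rw [← hdq]; exact dist_pos.mpr hxy
    have hcd := cd_eq a b
    have hnotC : ∀ (q' : Comb M), 0 < q'.ht → (¬ ∃ n : ℤ, 2*q'.ht = (2:ℝ)^n) →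
        mk q' ∉ C := by
      rintro q' hpos hnp ⟨q, hq, hPq⟩
      have h0 := cd_eq_zero_iff.mp (hmkeq' _ _ hq)
      have hqh : q.ht = q'.ht := h0.1
      rcases hPq with hq0 | ⟨hqpos, y, z, hy, hz⟩
      · rw [hq0] at hqh; linarith [hqh.symm ▸ hpos]
      · have hyz : y ≠ z := fun he => by rw [he, dist_self] at hz; linarith
        obtain ⟨n, hn⟩ := h2 y z hyz
        exact hnp ⟨n, by rw [← hqh, ← hz, hn]⟩
    rcases lt_or_ge a.ht (mpt a b) with hleg | hleg
    · -- up leg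
      have hm0 : 0 < mpt a b := lt_of_le_of_lt a.ht0 hleg
      obtain ⟨h, hh1, hh2, hh3⟩ := exists_between_nonpow
        (α := max a.ht (mpt a b / 2)) (β := mpt a b)
        (le_trans a.ht0 (le_max_left _ _)) (max_lt hleg (by linarith))
      have hha : a.ht < h := lt_of_le_of_lt (le_max_left _ _) hh1
      have hh0 : 0 < h := lt_of_le_of_lt (le_trans a.ht0 (le_max_left _ _)) hh1
      have hgu := geo_up (a := a) (b := b) (h := h) hha.le hh2.le
      have hw : mk ⟨a.pt, h, le_trans a.ht0 hha.le⟩ ∈ rTreeSeg (mk a) (mk b) := by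
        have := hseg_mem a b (h - a.ht) (by linarith)
          (by rw [cd_eq]; linarith [ht_le_mpt_right a b])
        rwa [hgu] at this
      have hwC : mk ⟨a.pt, h, le_trans a.ht0 hha.le⟩ ∈ C := by
        have := hsub hw
        rwa [hBC] at this
      exact hnotC ⟨a.pt, h, le_trans a.ht0 hha.le⟩ hh0 hh3 hwC
    · -- down leg
      have hma : a.ht = mpt a b := le_antisymm (ht_le_mpt_left a b) hleg
      have hmb : b.ht < mpt a b := by
        by_contra hcon
        push_neg at hcon
        have := ht_le_mpt_right a b
        have hmb' : b.ht = mpt a b := le_antisymm this hcon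
        rw [hcd] at hD
        linarith
      have hm0 : 0 < mpt a b := lt_of_le_of_lt b.ht0 hmb
      obtain ⟨h, hh1, hh2, hh3⟩ := exists_between_nonpow
        (α := max b.ht (mpt a b / 2)) (β := mpt a b)
        (le_trans b.ht0 (le_max_left _ _)) (max_lt hmb (by linarith))
      have hhb : b.ht < h := lt_of_le_of_lt (le_max_left _ _) hh1
      have hh0 : 0 < h := lt_of_le_of_lt (le_trans b.ht0 (le_max_left _ _)) hh1
      have hgd := geo_down (a := a) (b := b) (h := h) hhb.le hh2.le
      have hw : mk ⟨b.pt, h, le_trans b.ht0 hhb.le⟩ ∈ rTreeSeg (mk a) (mk b) := by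
        have hmem := hseg_mem a b (2 * mpt a b - a.ht - h)
          (by linarith [ht_le_mpt_left a b]) (by rw [cd_eq]; linarith)
        have heqw := hmkeq _ _ hgd
        rwa [heqw] at hmem
      have hwC : mk ⟨b.pt, h, le_trans b.ht0 hhb.le⟩ ∈ C := by
        have := hsub hw
        rwa [hBC] at this
      exact hnotC ⟨b.pt, h, le_trans b.ht0 hhb.le⟩ hh0 hh3 hwC
  have hRetract : ∃ r : (branchingPoints T ∪ Set.range e : Set T) → T,
      LipschitzWith 4 r ∧ Set.range r = Set.range e ∧
      ∀ a : (branchingPoints T ∪ Set.range e : Set T), (a : T) ∈ Set.range e → r a = a := by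
    have hmemC : ∀ a : (branchingPoints T ∪ Set.range e : Set T),
        ∃ p : Comb M, mk p = (a : T) ∧ P p := by
      have hgen : ∀ t : T, t ∈ branchingPoints T ∪ Set.range e → ∃ p, mk p = t ∧ P p := by
        intro t ht
        rw [hBC] at ht
        exact ht
      exact fun a => hgen a a.2
    choose rep hrep hP using hmemC
    have hid : ∀ a : (branchingPoints T ∪ Set.range e : Set T), (a : T) ∈ Set.range e →
        mk ⟨(rep a).pt, 0, le_refl 0⟩ = (a : T) := by
      rintro a ⟨x0, hx0⟩
      have hc : cd (rep a) ⟨x0, 0, le_refl 0⟩ = 0 := hmkeq' _ _ ((hrep a).trans hx0.symm)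
      rw [cd_eq_zero_iff] at hc
      have hz : (rep a).ht = 0 := hc.1
      have hpt : (rep a).pt = x0 := by
        have := hc.2
        rw [hz] at this
        have := le_antisymm (by linarith) dist_nonneg
        exact dist_eq_zero.mp this
      rw [← hx0]
      show mk _ = e x0
      rw [show (⟨(rep a).pt, 0, le_refl 0⟩ : Comb M) = ⟨x0, 0, le_refl 0⟩ from
        mk_eq_mk hpt rfl]
    refine ⟨fun a => mk ⟨(rep a).pt, 0, le_refl 0⟩, ?_, ?_, ?_⟩
    · apply LipschitzWith.of_dist_le_mul
      intro a b
      by_cases hab : a = b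
      · subst hab; simp
      · have hne : (a : T) ≠ (b : T) := fun h => hab (Subtype.ext h)
        have hda : dist (a : T) (b : T) = cd (rep a) (rep b) := by
          rw [← hrep a, ← hrep b, hdq]
        have hpos : (0:ℝ) < cd (rep a) (rep b) := by
          rw [← hda]; exact dist_pos.mpr hne
        have hgoal : dist (mk ⟨(rep a).pt, 0, le_refl 0⟩) (mk ⟨(rep b).pt, 0, le_refl 0⟩)
            = dist (rep a).pt (rep b).pt := by rw [hdq, hcd00]
        rw [hgoal, Subtype.dist_eq, hda]
        have hcds : cd (rep a) (rep b) = max (dist (rep a).pt (rep b).pt)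
            (max (2*(rep a).ht) (2*(rep b).ht)) - (rep a).ht - (rep b).ht := rfl
        have hP2 : ∀ c : (branchingPoints T ∪ Set.range e : Set T),
            (rep c).ht = 0 ∨ ∃ n : ℤ, 2*(rep c).ht = (2:ℝ)^n := by
          intro c
          rcases hP c with h0 | ⟨hcp, y, z, hy, hz⟩
          · exact Or.inl h0
          · right
            have hyz : y ≠ z := fun he => by rw [he, dist_self] at hz; linarith
            obtain ⟨n, hn⟩ := h2 y z hyz
            exact ⟨n, hz.symm.trans hn⟩
        have hdp : dist (rep a).pt (rep b).pt = 0 ∨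
            ∃ n : ℤ, dist (rep a).pt (rep b).pt = (2:ℝ)^n := by
          by_cases hpq : (rep a).pt = (rep b).pt
          · exact Or.inl (by rw [hpq, dist_self])
          · exact Or.inr (h2 _ _ hpq)
        have key := retract_ineq dist_nonneg (rep a).ht0 (rep b).ht0 hdp (hP2 a) (hP2 b)
          (by rw [← hcds]; exact hpos)
        rw [← hcds] at key
        have hco : ((4:NNReal) : ℝ) = 4 := by norm_num
        rw [hco]
        exact key
    · apply Set.Subset.antisymm
      · rintro t ⟨a, rfl⟩
        exact ⟨(rep a).pt, rfl⟩
      · rintro t ⟨x0, rfl⟩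
        have hmem : e x0 ∈ branchingPoints T ∪ Set.range e := Or.inr ⟨x0, rfl⟩
        exact ⟨⟨e x0, hmem⟩, hid ⟨e x0, hmem⟩ ⟨x0, rfl⟩⟩
    · exact hid
  have hSep : TopologicalSpace.SeparableSpace M → TopologicalSpace.SeparableSpace T := by
    intro hsepM
    letI : TopologicalSpace.SeparableSpace (M × ℝ) := inferInstance
    let g : M × ℝ → Comb M := fun q => ⟨q.1, max q.2 0, le_max_right _ _⟩
    have hg : ∀ q q' : M × ℝ, dist (g q) (g q') ≤ 2 * dist q q' := by
      intro q q'
      have e1 : dist (g q) (g q') = max (dist q.1 q'.1)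
          (max (2*(max q.2 0)) (2*(max q'.2 0))) - (max q.2 0) - (max q'.2 0) := rfl
      rw [e1, Prod.dist_eq, Real.dist_eq]
      have habs : |max q.2 0 - max q'.2 0| ≤ |q.2 - q'.2| := abs_max_sub_max_le_abs _ _ _
      have h1 := le_abs_self (max q.2 0 - max q'.2 0)
      have h2 := neg_abs_le (max q.2 0 - max q'.2 0)
      have h3 : |q.2 - q'.2| ≤ max (dist q.1 q'.1) |q.2 - q'.2| := le_max_right _ _
      have h4 : dist q.1 q'.1 ≤ max (dist q.1 q'.1) |q.2 - q'.2| := le_max_left _ _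
      have h5 : (0:ℝ) ≤ max (dist q.1 q'.1) |q.2 - q'.2| := le_trans dist_nonneg h4
      have h6 : (0:ℝ) ≤ max q.2 0 := le_max_right _ _
      have h7 : (0:ℝ) ≤ max q'.2 0 := le_max_right _ _
      have hA : max (dist q.1 q'.1) (max (2*(max q.2 0)) (2*(max q'.2 0))) ≤
          2 * max (dist q.1 q'.1) |q.2 - q'.2| + (max q.2 0) + (max q'.2 0) := by
        refine max_le (by linarith) (max_le (by linarith) (by linarith))
      linarith
    have hgl : LipschitzWith 2 g := LipschitzWith.of_dist_le_mul (fun q q' => by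
      have := hg q q'
      norm_num
      exact this)
    have hgs : Function.Surjective g := by
      intro p
      exact ⟨(p.pt, p.ht), mk_eq_mk rfl (max_eq_left p.ht0)⟩
    have hsc : TopologicalSpace.SeparableSpace (Comb M) :=
      hgs.denseRange.separableSpace hgl.continuous
    exact hsurj.denseRange.separableSpace SeparationQuotient.continuous_mk
  exact ⟨e, hRT, he, hBC ▸ hClosed, hNoSeg, hRetract, hSep⟩
end

section
/- There do not exist real numbers a_x, b_x, a_y, b_y and s ∈ (0,1] such that all of the following hold: |a_x| + |b_x| = 1; |a_y| + |b_y| = 1; |a_x − a_y| + |b_x − b_y| = s; |a_x + a_y| + |b_x + b_y| = 2; for every β > 0, max{s, s·β, (s/2)·(β + 1)} ≤ |a_x − β·a_y| + |b_x − β·b_y|; and for every β > 0, max{s, s·β, (s/2)·(β + 1)} ≤ |a_y − β·a_x| + |b_y − β·b_x|. -/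
/-!
Since `|a_x + a_y| + |b_x + b_y| = 2 = |a_x| + |a_y| + |b_x| + |b_y|`, the coordinates of the two
points have matching signs, so every condition only involves `u = |a_x|, v = |a_y|, p = |b_x|,
q = |b_y|`, with `u + p = v + q = 1`. Up to swapping the points, `v ≤ u ≤ 1` and `s = 2 (u - v)`.
The function `β ↦ |u - β v| + |p - β q|` equals `s` at `β = 1` and is affine near `1`, so it cannot
dominate `β ↦ max s (s β)`, which has a corner at `1`.
-/

theorem abs_sub_mul_eq_abs_sub_mul_abs {R : Type*} [CommRing R] [LinearOrder R]
    [IsStrictOrderedRing R] {a b : R} (hab : |a + b| = |a| + |b|) (β : R) :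
    |a - β * b| = |(|a| - β * |b|)| := by
  rcases (abs_add_eq_add_abs_iff a b).1 hab with ⟨ha, hb⟩ | ⟨ha, hb⟩
  · rw [abs_of_nonneg ha, abs_of_nonneg hb]
  · rw [abs_of_nonpos ha, abs_of_nonpos hb, ← abs_neg]
    ring_nf

theorem not_forall_max_le_abs_sub_mul_add_abs_sub_mul {u v p q s : ℝ} (hv : 0 ≤ v) (hp : 0 ≤ p)
    (hup : u + p = 1) (hvq : v + q = 1) (hvu : v ≤ u)
    (hs : |u - v| + |p - q| = s) (hs0 : 0 < s) :
    ¬ ∀ β : ℝ, 0 < β → max s (s * β) ≤ |u - β * v| + |p - β * q| := by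
  intro h
  set d := u - v
  have hsd : s = 2 * d := by
    rw [abs_of_nonneg (by linarith), abs_of_nonpos (by linarith)] at hs
    linarith
  have hd0 : 0 < d := by linarith
  -- On `[1 - d/2, 1 + d/2]` both absolute values keep their sign, so the right-hand side is
  -- affine there, with value `s` at the midpoint `1`.
  have hlo := (le_max_left _ _).trans (h (1 - d / 2) (by linarith))
  have hhi := (le_max_right _ _).trans (h (1 + d / 2) (by linarith))
  rw [abs_of_nonneg (by nlinarith), abs_of_nonpos (by nlinarith)] at hlo hhi
  nlinarith [mul_pos hs0 hd0]

theorem not_forall_max_le_of_abs_le {ax bx ay bY s : ℝ} (hx : |ax| + |bx| = 1)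
    (hy : |ay| + |bY| = 1) (hA : |ax + ay| = |ax| + |ay|) (hB : |bx + bY| = |bx| + |bY|)
    (hle : |ay| ≤ |ax|) (hs : |ax - ay| + |bx - bY| = s) (hs0 : 0 < s) :
    ¬ ∀ β : ℝ, 0 < β → max s (s * β) ≤ |ax - β * ay| + |bx - β * bY| := by
  simp only [abs_sub_mul_eq_abs_sub_mul_abs hA, abs_sub_mul_eq_abs_sub_mul_abs hB]
  refine not_forall_max_le_abs_sub_mul_add_abs_sub_mul (abs_nonneg _) (abs_nonneg _) hx hy hle
    ?_ hs0
  have hA₁ := abs_sub_mul_eq_abs_sub_mul_abs hA 1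
  have hB₁ := abs_sub_mul_eq_abs_sub_mul_abs hB 1
  simp only [one_mul] at hA₁ hB₁
  rwa [← hA₁, ← hB₁]

/-- There are no reals `a_x, b_x, a_y, b_y` and `s ∈ (0,1]` satisfying the system of
(in)equalities encoding an isometry of the Lipschitz-free space of a three-point
ultrametric space onto `(ℝ², ‖·‖₁)`. -/
theorem no_solution_three_point_system :
    ¬ ∃ (ax bx ay bY s : ℝ), 0 < s ∧ s ≤ 1 ∧
        |ax| + |bx| = 1 ∧
        |ay| + |bY| = 1 ∧
        |ax - ay| + |bx - bY| = s ∧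
        |ax + ay| + |bx + bY| = 2 ∧
        (∀ β : ℝ, 0 < β →
          max (max s (s * β)) (s / 2 * (β + 1)) ≤ |ax - β * ay| + |bx - β * bY|) ∧
        (∀ β : ℝ, 0 < β →
          max (max s (s * β)) (s / 2 * (β + 1)) ≤ |ay - β * ax| + |bY - β * bx|) := by
  rintro ⟨ax, bx, ay, bY, s, hs0, -, hx, hy, hs, hadd, hxy, hyx⟩
  have hA : |ax + ay| = |ax| + |ay| := by linarith [abs_add_le ax ay, abs_add_le bx bY]
  have hB : |bx + bY| = |bx| + |bY| := by linarith [abs_add_le ax ay, abs_add_le bx bY]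
  rcases le_total |ay| |ax| with hle | hle
  · exact not_forall_max_le_of_abs_le hx hy hA hB hle hs hs0
      fun β hβ => (le_max_left _ _).trans (hxy β hβ)
  · rw [add_comm ax, add_comm |ax|] at hA
    rw [add_comm bx, add_comm |bx|] at hB
    rw [abs_sub_comm ax, abs_sub_comm bx] at hs
    exact not_forall_max_le_of_abs_le hy hx hA hB hle hs hs0
      fun β hβ => (le_max_left _ _).trans (hyx β hβ)
end
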